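/- arXiv:1807.01694 — 8 statements merged into one kernel-verified Lean document; each statement's English description precedes it below -/
import Mathlib

section
/- Let G be an abelian group with a finitely additive translation invariant measure ν, and K ≤ G a ν-measurable subgroup with 0 < ν(K) < ∞. If A, B ⊆ G, a ∈ A, b ∈ B satisfy ν((a + K) ∩ A) + ν((b + K) ∩ B) > ν(K), then the full coset a + b + K is contained in A + B. -/
open Pointwise

/-- A finitely additive, translation invariant measure on an abelian group `G`,
defined on an algebra `Meas` of "measurable" subsets of `G`, with values in `[0,∞]`. -/
structure FAM (G : Type*) [AddCommGroup G] where
  Meas : Set G → Prop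
  m : Set G → ENNReal
  meas_empty : Meas ∅
  meas_compl : ∀ {A : Set G}, Meas A → Meas Aᶜ
  meas_union : ∀ {A B : Set G}, Meas A → Meas B → Meas (A ∪ B)
  m_empty : m ∅ = 0
  m_union : ∀ {A B : Set G}, Meas A → Meas B → Disjoint A B → m (A ∪ B) = m A + m B
  m_mono : ∀ {A B : Set G}, Meas A → Meas B → A ⊆ B → m A ≤ m B
  meas_vadd : ∀ (t : G) {A : Set G}, Meas A → Meas (t +ᵥ A)
  m_vadd : ∀ (t : G) {A : Set G}, Meas A → m (t +ᵥ A) = m A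

namespace FAM

variable {G : Type*} [AddCommGroup G] (μ : FAM G)

/-- The inner measure associated to `μ`:
`μ_*(S) = sup { μ(C) : C ⊆ S, C measurable }`. -/
noncomputable def inn (S : Set G) : ENNReal := ⨆ (C : Set G) (_ : μ.Meas C ∧ C ⊆ S), μ.m C

/-- The stabilizer of a subset `C` of `G`: `H(C) = {g : C + g = C}`. -/
def stab (C : Set G) : Set G := {g : G | g +ᵥ C = C}

/-- `μ` is symmetric: `-A` is measurable and `μ(-A) = μ(A)` for measurable `A`. -/
def Symm : Prop := ∀ A : Set G, μ.Meas A → μ.Meas (-A) ∧ μ.m (-A) = μ.m A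

end FAM

/-- If `K` is a measurable subgroup with `0 < ν(K) < ∞` and
`ν((a+K) ∩ A) + ν((b+K) ∩ B) > ν(K)` for some `a ∈ A`, `b ∈ B`,
then `a + b + K ⊆ A + B`. -/
theorem coset_subset_sumset {G : Type*} [AddCommGroup G] (μ : FAM G) (hsym : μ.Symm)
    (K : AddSubgroup G) (hK : μ.Meas (K : Set G))
    (hK0 : 0 < μ.m (K : Set G)) (hKfin : μ.m (K : Set G) ≠ ⊤)
    (A B : Set G) (hA : μ.Meas A) (hB : μ.Meas B)
    (a : G) (ha : a ∈ A) (b : G) (hb : b ∈ B)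
    (h : μ.m (K : Set G) < μ.m ((a +ᵥ (K : Set G)) ∩ A) + μ.m ((b +ᵥ (K : Set G)) ∩ B)) :
    (a + b) +ᵥ (K : Set G) ⊆ A + B := by
  have meas_inter : ∀ {X Y : Set G}, μ.Meas X → μ.Meas Y → μ.Meas (X ∩ Y) := by
    intro X Y hX hY
    have : X ∩ Y = (Xᶜ ∪ Yᶜ)ᶜ := by simp [Set.compl_union]
    rw [this]
    exact μ.meas_compl (μ.meas_union (μ.meas_compl hX) (μ.meas_compl hY))
  intro z hz
  obtain ⟨k, hk, rfl⟩ := hz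
  set A' : Set G := (-a) +ᵥ ((a +ᵥ (K : Set G)) ∩ A) with hA'def
  set B' : Set G := (-b) +ᵥ ((b +ᵥ (K : Set G)) ∩ B) with hB'def
  have hmA' : μ.Meas A' := μ.meas_vadd _ (meas_inter (μ.meas_vadd _ hK) hA)
  have hmB' : μ.Meas B' := μ.meas_vadd _ (meas_inter (μ.meas_vadd _ hK) hB)
  have hA'sub : A' ⊆ (K : Set G) := by
    rintro x ⟨y, ⟨⟨u, hu, rfl⟩, hyA⟩, rfl⟩
    simpa using hu
  have hB'sub : B' ⊆ (K : Set G) := by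
    rintro x ⟨y, ⟨⟨u, hu, rfl⟩, hyB⟩, rfl⟩
    simpa using hu
  set C : Set G := k +ᵥ (-B') with hCdef
  have hmC : μ.Meas C := μ.meas_vadd _ (hsym _ hmB').1
  have hCsub : C ⊆ (K : Set G) := by
    rintro x ⟨y, hy, rfl⟩
    exact K.add_mem hk (by simpa using K.neg_mem (hB'sub (Set.mem_neg.mp hy)))
  have hmCval : μ.m C = μ.m ((b +ᵥ (K : Set G)) ∩ B) := by
    rw [hCdef, μ.m_vadd _ (hsym _ hmB').1, (hsym _ hmB').2, hB'def,
      μ.m_vadd _ (meas_inter (μ.meas_vadd _ hK) hB)]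
  have hmA'val : μ.m A' = μ.m ((a +ᵥ (K : Set G)) ∩ A) := by
    rw [hA'def, μ.m_vadd _ (meas_inter (μ.meas_vadd _ hK) hA)]
  have hnd : ¬ Disjoint A' C := by
    intro hd
    have hle : μ.m (A' ∪ C) ≤ μ.m (K : Set G) :=
      μ.m_mono (μ.meas_union hmA' hmC) hK (Set.union_subset hA'sub hCsub)
    rw [μ.m_union hmA' hmC hd, hmA'val, hmCval] at hle
    exact absurd hle (not_le.mpr h)
  obtain ⟨x, hxA', hxC⟩ := Set.not_disjoint_iff.mp hnd
  obtain ⟨y, hy, hxy⟩ := hxC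
  have hyB' : -y ∈ B' := Set.mem_neg.mp hy
  obtain ⟨p, ⟨hpK, hpA⟩, hpx⟩ := hxA'
  obtain ⟨q, ⟨hqK, hqB⟩, hqy⟩ := hyB'
  refine ⟨p, hpA, q, hqB, ?_⟩
  have hpx' : -a + p = x := hpx
  have hqy' : -b + q = -y := hqy
  have hxy' : k + y = x := hxy
  have key : -a + p = k + -(-b + q) := by rw [hpx', hqy', neg_neg, hxy']
  show p + q = (a + b) +ᵥ k
  show p + q = (a + b) + k
  calc p + q = a + (-a + p) + (-b + q) + b := by abel
    _ = a + (k + -(-b + q)) + (-b + q) + b := by rw [key]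
    _ = (a + b) + k := by abel
end

section
/- Let G be an abelian group with a finitely additive translation invariant measure ν, K a ν-measurable finite index subgroup with ν(K) > 0, A ⊆ G, and B ⊆ G a K-solid set (for all g ∈ G, either ν((g+K) ∩ B) > 0 or (g+K) ∩ B = ∅). Assume ν((A+B) Δ (A+B+K)) = 0. Then for every g ∈ G: ν((g + B) \ (A + B + K)) = 0 if and only if g + B + K ⊆ A + B + K. -/
open Pointwise

/-!
Let `T = A + B + K`. It is `K`-saturated, so (`K` having finite index) it is a finite union of
cosets of `K` and hence measurable. If `g + B ⊆_ν T` and `b ∈ B`, solidity gives the piece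
`C = (b + K) ∩ B` positive measure, so `g + C` cannot be null-disjoint from `T`: some `g + c`
with `c ∈ b + K` lies in `T`, and saturation moves this to `g + b + K ⊆ T`.
-/

namespace FAM

variable {G : Type*} [AddCommGroup G] (μ : FAM G)

def IsSolid (K : AddSubgroup G) (B : Set G) : Prop :=
  ∀ g : G, 0 < μ.m ((g +ᵥ (K : Set G)) ∩ B) ∨ (g +ᵥ (K : Set G)) ∩ B = ∅

lemma meas_inter {X Y : Set G} (hX : μ.Meas X) (hY : μ.Meas Y) : μ.Meas (X ∩ Y) := by
  simpa using μ.meas_compl (μ.meas_union (μ.meas_compl hX) (μ.meas_compl hY))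

lemma meas_diff {X Y : Set G} (hX : μ.Meas X) (hY : μ.Meas Y) : μ.Meas (X \ Y) :=
  μ.meas_inter hX (μ.meas_compl hY)

lemma meas_biUnion_finset {ι : Type*} (s : Finset ι) {f : ι → Set G}
    (hf : ∀ i ∈ s, μ.Meas (f i)) : μ.Meas (⋃ i ∈ s, f i) := by
  classical
  induction s using Finset.induction_on with
  | empty => simpa using μ.meas_empty
  | insert i s _ ih =>
    rw [Finset.set_biUnion_insert]
    exact μ.meas_union (hf i (s.mem_insert_self i)) (ih fun j hj => hf j (s.mem_insert_of_mem hj))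

lemma meas_iUnion {ι : Type*} [Finite ι] {f : ι → Set G} (hf : ∀ i, μ.Meas (f i)) :
    μ.Meas (⋃ i, f i) := by
  cases nonempty_fintype ι
  simpa using μ.meas_biUnion_finset Finset.univ fun i _ => hf i

lemma add_mem_of_add_addSubgroup_eq {K : AddSubgroup G} {X : Set G} (hX : X + (K : Set G) = X)
    {x k : G} (hx : x ∈ X) (hk : k ∈ K) : x + k ∈ X :=
  hX ▸ Set.add_mem_add hx hk

lemma meas_of_add_addSubgroup_eq {K : AddSubgroup G} [K.FiniteIndex] (hK : μ.Meas (K : Set G))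
    {X : Set G} (hX : X + (K : Set G) = X) : μ.Meas X := by
  have hunion : X = ⋃ q : {q : G ⧸ K // q.out ∈ X}, q.1.out +ᵥ (K : Set G) := by
    ext x
    simp only [Set.mem_iUnion, mem_leftAddCoset_iff, SetLike.mem_coe, Subtype.exists,
      exists_prop]
    constructor
    · intro hx
      set q : G ⧸ K := QuotientAddGroup.mk x
      have hk : -q.out + x ∈ K := QuotientAddGroup.eq.mp (QuotientAddGroup.out_eq' q)
      refine ⟨q, ?_, hk⟩
      rw [show q.out = x + -(-q.out + x) by abel]
      exact add_mem_of_add_addSubgroup_eq hX hx (K.neg_mem hk)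
    · rintro ⟨q, hq, hk⟩
      rw [← add_neg_cancel_left q.out x]
      exact add_mem_of_add_addSubgroup_eq hX hq hk
  rw [hunion]
  exact μ.meas_iUnion fun _ => μ.meas_vadd _ hK

lemma m_eq_zero_of_subset {X Y : Set G} (hX : μ.Meas X) (hY : μ.Meas Y) (hXY : X ⊆ Y)
    (hY0 : μ.m Y = 0) : μ.m X = 0 :=
  nonpos_iff_eq_zero.mp (hY0 ▸ μ.m_mono hX hY hXY)

variable {μ}

lemma IsSolid.pos_of_mem {K : AddSubgroup G} {B : Set G} (hsolid : μ.IsSolid K B) {b : G}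
    (hb : b ∈ B) : 0 < μ.m ((b +ᵥ (K : Set G)) ∩ B) :=
  (hsolid b).resolve_right (Set.nonempty_iff_ne_empty.mp ⟨b, ⟨0, K.zero_mem, add_zero b⟩, hb⟩)

lemma exists_vadd_mem_of_m_vadd_diff_eq_zero {B C T : Set G} (hB : μ.Meas B) (hC : μ.Meas C)
    (hT : μ.Meas T) (hCB : C ⊆ B) (hC0 : 0 < μ.m C) {g : G}
    (h : μ.m ((g +ᵥ B) \ T) = 0) : ∃ c ∈ C, g + c ∈ T := by
  by_contra! hnot
  have hsub : g +ᵥ C ⊆ (g +ᵥ B) \ T := by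
    rintro _ ⟨c, hc, rfl⟩
    exact ⟨Set.vadd_mem_vadd_set (hCB hc), hnot c hc⟩
  have := μ.m_eq_zero_of_subset (μ.meas_vadd g hC) (μ.meas_diff (μ.meas_vadd g hB) hT) hsub h
  rw [μ.m_vadd g hC] at this
  exact hC0.ne' this

lemma m_vadd_diff_eq_zero_iff {K : AddSubgroup G} (hK : μ.Meas (K : Set G)) {B T : Set G}
    (hB : μ.Meas B) (hsolid : μ.IsSolid K B) (hT : μ.Meas T) (hTK : T + (K : Set G) = T)
    (g : G) : μ.m ((g +ᵥ B) \ T) = 0 ↔ (g +ᵥ B) + (K : Set G) ⊆ T := by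
  constructor
  · rintro h _ ⟨_, ⟨b, hb, rfl⟩, k, hk, rfl⟩
    obtain ⟨c, ⟨⟨k', hk', rfl⟩, -⟩, hcT⟩ := exists_vadd_mem_of_m_vadd_diff_eq_zero hB
      (μ.meas_inter (μ.meas_vadd b hK) hB) hT Set.inter_subset_right (hsolid.pos_of_mem hb) h
    have hgb : g +ᵥ b ∈ T := by
      rw [show g +ᵥ b = g + (b +ᵥ k') + -k' by simp only [vadd_eq_add]; abel]
      exact add_mem_of_add_addSubgroup_eq hTK hcT (K.neg_mem hk')
    exact add_mem_of_add_addSubgroup_eq hTK hgb hk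
  · intro h
    rw [Set.sdiff_eq_empty.mpr fun x hx => h (by simpa using Set.add_mem_add hx K.zero_mem),
      μ.m_empty]

end FAM

theorem solid_move_general {G : Type*} [AddCommGroup G] (μ : FAM G)
    (K : AddSubgroup G) [K.FiniteIndex] (hK : μ.Meas (K : Set G))
    (A B : Set G) (hB : μ.Meas B)
    (hsolid : ∀ g : G, 0 < μ.m ((g +ᵥ (K : Set G)) ∩ B) ∨ (g +ᵥ (K : Set G)) ∩ B = ∅) :
    ∀ g : G,
      μ.m ((g +ᵥ B) \ (A + B + (K : Set G))) = 0 ↔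
        (g +ᵥ B) + (K : Set G) ⊆ A + B + (K : Set G) := by
  have hTK : A + B + (K : Set G) + (K : Set G) = A + B + (K : Set G) := by
    rw [add_assoc, coe_add_coe]
  exact FAM.m_vadd_diff_eq_zero_iff hK hB hsolid (μ.meas_of_add_addSubgroup_eq hK hTK) hTK

/-- for a measurable finite index subgroup `K` with `ν(K) > 0`, `A ⊆ G`,
and `B` a `K`-solid set, if `A+B ∼_ν A+B+K` then for every `g`:
`g + B ⊆_ν A+B+K` iff `g + B + K ⊆ A+B+K`. -/
theorem solid_move {G : Type*} [AddCommGroup G] (μ : FAM G)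
    (K : AddSubgroup G) [K.FiniteIndex] (hK : μ.Meas (K : Set G))
    (hK0 : 0 < μ.m (K : Set G))
    (A B : Set G) (hB : μ.Meas B)
    (hsolid : ∀ g : G, 0 < μ.m ((g +ᵥ (K : Set G)) ∩ B) ∨ (g +ᵥ (K : Set G)) ∩ B = ∅)
    (hsim : μ.m (((A + B) \ (A + B + (K : Set G))) ∪ ((A + B + (K : Set G)) \ (A + B))) = 0) :
    ∀ g : G,
      μ.m ((g +ᵥ B) \ (A + B + (K : Set G))) = 0 ↔
        (g +ᵥ B) + (K : Set G) ⊆ A + B + (K : Set G) :=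
  solid_move_general μ K hK A B hB hsolid
end

section
/- Let G be an abelian group with a finitely additive translation invariant measure ν, and K ≤ G a ν-measurable subgroup with 0 < ν(K) < ∞. Suppose C, D ⊆ G satisfy C = C + K, D = D + K, and ν(C+D) = ν(C) + ν(D) − ν(K). Suppose C₀ ⊆ C and D₀ ⊆ D are cosets of K such that C₀ + D₀ is a unique expression element of C + D + K in G/K. Let A₁ = C \ C₀, B₁ = D \ D₀, and let A₀ ⊆ C₀, B₀ ⊆ D₀ be nonempty sets with ν_*(A₀ + B₀) ≤ ν(A₀) + ν(B₀). Then A = A₁ ∪ A₀ and B = B₁ ∪ B₀ satisfy ν_*(A + B) ≤ ν(A) + ν(B). -/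
open Pointwise

/-- building a subcritical quasi-periodic pair from periodic sets `C, D`
satisfying `ν(C+D) = ν(C) + ν(D) − ν(K)` (stated additively), a unique expression
coset pair `C₀, D₀`, and a subcritical pair `A₀ ⊆ C₀`, `B₀ ⊆ D₀`. -/
theorem build_quasi_periodic {G : Type*} [AddCommGroup G] (μ : FAM G) (hsym : μ.Symm)
    (K : AddSubgroup G) (hK : μ.Meas (K : Set G))
    (hK0 : 0 < μ.m (K : Set G)) (hKfin : μ.m (K : Set G) ≠ ⊤)
    (C D : Set G) (hC : μ.Meas C) (hD : μ.Meas D) (hCD : μ.Meas (C + D))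
    (hCper : C + (K : Set G) = C) (hDper : D + (K : Set G) = D)
    (hKneser : μ.m (C + D) + μ.m (K : Set G) = μ.m C + μ.m D)
    (C₀ D₀ : Set G) (c d : G)
    (hC₀ : C₀ = c +ᵥ (K : Set G)) (hD₀ : D₀ = d +ᵥ (K : Set G))
    (hC₀sub : C₀ ⊆ C) (hD₀sub : D₀ ⊆ D)
    (huee : ∀ a ∈ C, ∀ b ∈ D, (a + b) +ᵥ (K : Set G) = C₀ + D₀ → a ∈ C₀ ∧ b ∈ D₀)
    (A₀ B₀ : Set G) (hA₀ : μ.Meas A₀) (hB₀ : μ.Meas B₀)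
    (hA₀sub : A₀ ⊆ C₀) (hB₀sub : B₀ ⊆ D₀)
    (hA₀ne : A₀.Nonempty) (hB₀ne : B₀.Nonempty)
    (hsmall : μ.inn (A₀ + B₀) ≤ μ.m A₀ + μ.m B₀) :
    μ.inn (((C \ C₀) ∪ A₀) + ((D \ D₀) ∪ B₀)) ≤
      μ.m ((C \ C₀) ∪ A₀) + μ.m ((D \ D₀) ∪ B₀) := by

  classical
  -- abbreviations
  set A : Set G := (C \ C₀) ∪ A₀ with hA
  set B : Set G := (D \ D₀) ∪ B₀ with hB
  have meas_inter : ∀ {X Y : Set G}, μ.Meas X → μ.Meas Y → μ.Meas (X ∩ Y) := by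
    intro X Y hX hY
    have h : X ∩ Y = (Xᶜ ∪ Yᶜ)ᶜ := by simp [Set.compl_union]
    rw [h]
    exact μ.meas_compl (μ.meas_union (μ.meas_compl hX) (μ.meas_compl hY))
  have meas_diff : ∀ {X Y : Set G}, μ.Meas X → μ.Meas Y → μ.Meas (X \ Y) := by
    intro X Y hX hY
    rw [Set.diff_eq]
    exact meas_inter hX (μ.meas_compl hY)
  have hKK : (K : Set G) + (K : Set G) = (K : Set G) := by
    ext x
    constructor
    · rintro ⟨a, ha, b, hb, rfl⟩
      exact K.add_mem ha hb
    · intro hx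
      exact ⟨x, hx, 0, K.zero_mem, add_zero x⟩
  set P : Set G := C₀ + D₀ with hPdef
  have hPeq : P = (c + d) +ᵥ (K : Set G) := by
    rw [hPdef, hC₀, hD₀]
    ext x
    simp only [Set.mem_add, Set.mem_vadd_set, vadd_eq_add, SetLike.mem_coe]
    constructor
    · rintro ⟨_, ⟨k1, hk1, rfl⟩, _, ⟨k2, hk2, rfl⟩, rfl⟩
      exact ⟨k1 + k2, K.add_mem hk1 hk2, by abel⟩
    · rintro ⟨k, hk, rfl⟩
      exact ⟨c + k, ⟨k, hk, rfl⟩, d + 0, ⟨0, K.zero_mem, rfl⟩, by abel⟩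
  have hPmeas : μ.Meas P := by rw [hPeq]; exact μ.meas_vadd _ hK
  have hPm : μ.m P = μ.m (K : Set G) := by rw [hPeq]; exact μ.m_vadd _ hK
  have hPsub : P ⊆ C + D := Set.add_subset_add hC₀sub hD₀sub
  have hAC : A ⊆ C := by
    rw [hA]
    exact Set.union_subset (Set.diff_subset) (hA₀sub.trans hC₀sub)
  have hBD : B ⊆ D := by
    rw [hB]
    exact Set.union_subset (Set.diff_subset) (hB₀sub.trans hD₀sub)
  have hABsub : A + B ⊆ C + D := Set.add_subset_add hAC hBD
  -- members of P generate P as coset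
  have hcoset : ∀ x ∈ P, x +ᵥ (K : Set G) = P := by
    intro x hx
    rw [hPeq] at hx
    obtain ⟨k, hk, rfl⟩ := hx
    have hkK : k +ᵥ (K : Set G) = (K : Set G) := by
      ext y
      simp only [Set.mem_vadd_set_iff_neg_vadd_mem, vadd_eq_add, SetLike.mem_coe]
      constructor
      · intro h
        have := K.add_mem hk h
        simpa using this
      · intro h
        exact K.add_mem (K.neg_mem hk) h
    show ((c + d) +ᵥ k) +ᵥ (K : Set G) = P
    rw [vadd_eq_add, ← vadd_vadd, hkK, hPeq]
  -- key inclusion for the intersection part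
  have hinterP : (A + B) ∩ P ⊆ A₀ + B₀ := by
    rintro x ⟨⟨a, ha, b, hb, rfl⟩, hxP⟩
    have hueeres := huee a (hAC ha) b (hBD hb) (hcoset _ hxP)
    have haA₀ : a ∈ A₀ := by
      rcases ha with h | h
      · exact absurd hueeres.1 h.2
      · exact h
    have hbB₀ : b ∈ B₀ := by
      rcases hb with h | h
      · exact absurd hueeres.2 h.2
      · exact h
    exact ⟨a, haA₀, b, hbB₀, rfl⟩
  -- measure of complement part
  have hdisj : Disjoint ((C + D) \ P) P := Set.disjoint_sdiff_left.mono_right le_rfl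
  have hCDsplit : μ.m ((C + D) \ P) + μ.m P = μ.m (C + D) := by
    rw [← μ.m_union (meas_diff hCD hPmeas) hPmeas hdisj, Set.diff_union_of_subset hPsub]
  -- measures of A and B
  have hC₀meas : μ.Meas C₀ := by rw [hC₀]; exact μ.meas_vadd _ hK
  have hD₀meas : μ.Meas D₀ := by rw [hD₀]; exact μ.meas_vadd _ hK
  have hC₀m : μ.m C₀ = μ.m (K : Set G) := by rw [hC₀]; exact μ.m_vadd _ hK
  have hD₀m : μ.m D₀ = μ.m (K : Set G) := by rw [hD₀]; exact μ.m_vadd _ hK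
  have hAmeas : μ.Meas A := μ.meas_union (meas_diff hC hC₀meas) hA₀
  have hBmeas : μ.Meas B := μ.meas_union (meas_diff hD hD₀meas) hB₀
  have hAm : μ.m A + μ.m (K : Set G) = μ.m C + μ.m A₀ := by
    have h1 : μ.m A = μ.m (C \ C₀) + μ.m A₀ :=
      μ.m_union (meas_diff hC hC₀meas) hA₀
        (Set.disjoint_sdiff_left.mono_right hA₀sub)
    have h2 : μ.m (C \ C₀) + μ.m C₀ = μ.m C := by
      rw [← μ.m_union (meas_diff hC hC₀meas) hC₀meas
        (Set.disjoint_sdiff_left.mono_right le_rfl), Set.diff_union_of_subset hC₀sub]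
    rw [h1, ← hC₀m, ← h2]
    ring
  have hBm : μ.m B + μ.m (K : Set G) = μ.m D + μ.m B₀ := by
    have h1 : μ.m B = μ.m (D \ D₀) + μ.m B₀ :=
      μ.m_union (meas_diff hD hD₀meas) hB₀
        (Set.disjoint_sdiff_left.mono_right hB₀sub)
    have h2 : μ.m (D \ D₀) + μ.m D₀ = μ.m D := by
      rw [← μ.m_union (meas_diff hD hD₀meas) hD₀meas
        (Set.disjoint_sdiff_left.mono_right le_rfl), Set.diff_union_of_subset hD₀sub]
    rw [h1, ← hD₀m, ← h2]
    ring
  -- main bound: every measurable E ⊆ A + B has μ(E) ≤ μ(A) + μ(B)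
  refine iSup_le fun E => iSup_le fun hE => ?_
  obtain ⟨hEmeas, hEsub⟩ := hE
  have hEsplit : μ.m E = μ.m (E \ P) + μ.m (E ∩ P) := by
    rw [← μ.m_union (meas_diff hEmeas hPmeas) (meas_inter hEmeas hPmeas)
      (Set.disjoint_sdiff_left.mono_right Set.inter_subset_right),
      Set.diff_union_inter]
  have h1 : μ.m (E \ P) ≤ μ.m ((C + D) \ P) :=
    μ.m_mono (meas_diff hEmeas hPmeas) (meas_diff hCD hPmeas)
      (Set.diff_subset_diff_left (hEsub.trans hABsub))
  have h2 : μ.m (E ∩ P) ≤ μ.m A₀ + μ.m B₀ := by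
    refine le_trans ?_ hsmall
    refine le_trans ?_ (le_iSup _ (E ∩ P))
    exact le_iSup (fun _ => μ.m (E ∩ P))
      ⟨meas_inter hEmeas hPmeas, (Set.inter_subset_inter_left P hEsub).trans hinterP⟩
  have key : μ.m E + (μ.m (K : Set G) + μ.m (K : Set G)) ≤
      (μ.m A + μ.m B) + (μ.m (K : Set G) + μ.m (K : Set G)) := by
    calc μ.m E + (μ.m (K : Set G) + μ.m (K : Set G))
        = (μ.m (E \ P) + μ.m (K : Set G)) + (μ.m (E ∩ P) + μ.m (K : Set G)) := by
          rw [hEsplit]; ring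
      _ ≤ (μ.m ((C + D) \ P) + μ.m (K : Set G)) + (μ.m A₀ + μ.m B₀ + μ.m (K : Set G)) := by
          gcongr
      _ = (μ.m ((C + D) \ P) + μ.m P) + μ.m (K : Set G) + (μ.m A₀ + μ.m B₀) := by
          rw [hPm]; ring
      _ = μ.m C + μ.m D + (μ.m A₀ + μ.m B₀) := by rw [hCDsplit, hKneser]
      _ = (μ.m A + μ.m (K : Set G)) + (μ.m B + μ.m (K : Set G)) := by rw [hAm, hBm]; ring
      _ = (μ.m A + μ.m B) + (μ.m (K : Set G) + μ.m (K : Set G)) := by ring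
  have hfin : μ.m (K : Set G) + μ.m (K : Set G) ≠ ⊤ := by
    simp [hKfin]
  exact (ENNReal.add_le_add_iff_right hfin).mp key
end

section
/- Let G be a compact metrizable abelian group with Haar probability measure m, and f, g : G → [0,1] be m-measurable. Set C₀ = {x : f(x) > 0} and D₀ = {x : g(x) > 0}. Then there exist Borel sets C ⊆ C₀ and D ⊆ D₀ with m(C) = m(C₀), m(D) = m(D₀), such that C + D is Borel and C + D ⊆ {x ∈ G : (f * g)(x) > 0}. -/
/-!
Translation is continuous in measure, so there are open neighbourhoods `V j` of `0` such that
`m (C₀ \ (C₀ - v)) ≤ 2⁻¹ ^ j` and `m (D₀ \ (D₀ + v)) ≤ 2⁻¹ ^ j` for `v ∈ V j`. By Fubini and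
Markov, the points `c ∈ C₀` for which at least half of `c + V j` misses `C₀` form a set of
measure `≤ 2 * 2⁻¹ ^ j`, so by Borel–Cantelli almost every `c ∈ C₀` eventually sees `C₀` on more
than half of `c + V j`; likewise almost every `d ∈ D₀` sees `D₀` on more than half of `d - V j`.
For two such points, `{v ∈ V j | c + v ∈ C₀}` and `{v ∈ V j | d - v ∈ D₀}` overlap in positive
measure, which makes `(f * g) (c + d)` positive. Inner regularity shrinks the full-measure sets
of such points to σ-compact ones, whose sum is again σ-compact, hence Borel.
-/

open MeasureTheory Pointwise Filter Set Topology
open scoped ENNReal symmDiff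

section Translation

variable {G : Type*} [AddGroup G] [TopologicalSpace G] [IsTopologicalAddGroup G]
  [R1Space G] [MeasurableSpace G] [BorelSpace G]
  {m : Measure G} [m.IsAddRightInvariant] [m.InnerRegularCompactLTTop] [IsLocallyFiniteMeasure m]

theorem tendsto_measure_sdiff_preimage_add_right {A : Set G} (hA : MeasurableSet A)
    (hmA : m A ≠ ∞) :
    Tendsto (fun v ↦ m (A \ (· + v) ⁻¹' A)) (𝓝 0) (𝓝 0) := by
  let shift : C(G, C(G, G)) := ContinuousMap.curry ⟨fun p : G × G ↦ p.2 + p.1, by fun_prop⟩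
  have hsymm : Tendsto (fun v ↦ m ((shift v ⁻¹' A) ∆ (shift 0 ⁻¹' A))) (𝓝 0) (𝓝 0) :=
    tendsto_measure_symmDiff_preimage_nhds_zero (shift.continuous.tendsto 0)
      (.of_forall fun v ↦ measurePreserving_add_right m v) (measurePreserving_add_right m 0)
      hA.nullMeasurableSet hmA
  have hshift0 : shift 0 ⁻¹' A = A := by ext; simp [shift]
  refine tendsto_of_tendsto_of_tendsto_of_le_of_le tendsto_const_nhds hsymm
    (fun _ ↦ zero_le) fun v ↦ measure_mono ?_
  rw [hshift0, Set.symmDiff_def]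
  exact subset_union_right

theorem tendsto_measure_sdiff_preimage_sub_right {A : Set G} (hA : MeasurableSet A)
    (hmA : m A ≠ ∞) :
    Tendsto (fun v ↦ m (A \ (· - v) ⁻¹' A)) (𝓝 0) (𝓝 0) := by
  simpa [Function.comp_def, sub_eq_add_neg] using
    (tendsto_measure_sdiff_preimage_add_right hA hmA).comp
      (continuous_neg.tendsto' (0 : G) 0 neg_zero)

end Translation

section Fubini

variable {X Y : Type*} [MeasurableSpace X] [MeasurableSpace Y]
  {μ : Measure X} {ν : Measure Y} [SFinite μ] [SFinite ν]

theorem mul_measure_le_of_measure_fiber_le {T : Set (X × Y)} (hT : MeasurableSet T)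
    {V : Set Y} (hV : MeasurableSet V) (hTV : ∀ p ∈ T, p.2 ∈ V) {ε : ℝ≥0∞}
    (hε : ∀ v ∈ V, μ ((·, v) ⁻¹' T) ≤ ε) (t : ℝ≥0∞) :
    t * μ {x | t ≤ ν (Prod.mk x ⁻¹' T)} ≤ ε * ν V := by
  have hfiber : ∀ v, μ ((·, v) ⁻¹' T) ≤ V.indicator (fun _ ↦ ε) v := by
    intro v
    by_cases hv : v ∈ V
    · simpa [hv] using hε v hv
    · have : (·, v) ⁻¹' T = ∅ := eq_empty_of_forall_notMem fun x hx ↦ hv (hTV _ hx)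
      simp [this]
  calc t * μ {x | t ≤ ν (Prod.mk x ⁻¹' T)}
      ≤ ∫⁻ x, ν (Prod.mk x ⁻¹' T) ∂μ :=
        mul_meas_ge_le_lintegral₀ (measurable_measure_prodMk_left hT).aemeasurable t
    _ = ∫⁻ v, μ ((·, v) ⁻¹' T) ∂ν := by
        rw [← Measure.prod_apply hT, Measure.prod_apply_symm hT]
    _ ≤ ∫⁻ v, V.indicator (fun _ ↦ ε) v ∂ν := lintegral_mono hfiber
    _ = ε * ν V := lintegral_indicator_const hV ε

theorem ae_eventually_measure_sdiff_preimage_lt_half {k : X → Y → X}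
    (hk : Measurable (Function.uncurry k)) {A : Set X} (hA : MeasurableSet A)
    {V : ℕ → Set Y} (hV : ∀ j, MeasurableSet (V j)) (hV0 : ∀ j, ν (V j) ≠ 0)
    (hVtop : ∀ j, ν (V j) ≠ ∞) {ε : ℕ → ℝ≥0∞} (hεsum : ∑' j, ε j ≠ ∞)
    (hε : ∀ j, ∀ v ∈ V j, μ (A \ (k · v) ⁻¹' A) ≤ ε j) :
    ∀ᵐ x ∂μ, x ∈ A → ∀ᶠ j in atTop, ν (V j \ k x ⁻¹' A) < ν (V j) / 2 := by
  let bad : ℕ → Set X := fun j ↦ {x | ν (V j) / 2 ≤ ν (V j \ k x ⁻¹' A)}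
  have hbad : ∀ j, μ.restrict A (bad j) ≤ 2 * ε j := by
    intro j
    let T : Set (X × Y) := {p | p.2 ∈ V j ∧ k p.1 p.2 ∉ A}
    have hT : MeasurableSet T := measurable_snd (hV j) |>.inter (hk hA.compl)
    have hfiber : ∀ v ∈ V j, μ.restrict A ((·, v) ⁻¹' T) ≤ ε j := by
      intro v hv
      rw [Measure.restrict_apply' hA]
      refine le_of_eq_of_le ?_ (hε j v hv)
      congr 1
      ext x
      simp [T, hv, and_comm]
    have hmarkov := mul_measure_le_of_measure_fiber_le (ν := ν) hT (hV j) (fun _ hp ↦ hp.1)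
      hfiber (ν (V j) / 2)
    have hhalf0 : ν (V j) / 2 ≠ 0 := ENNReal.div_ne_zero.2 ⟨hV0 j, ENNReal.ofNat_ne_top⟩
    have hhalftop : ν (V j) / 2 ≠ ∞ := ENNReal.div_ne_top (hVtop j) two_ne_zero
    rw [← ENNReal.mul_le_mul_iff_right hhalf0 hhalftop]
    calc ν (V j) / 2 * μ.restrict A (bad j) ≤ ε j * ν (V j) := hmarkov
      _ = ν (V j) / 2 * (2 * ε j) := by
        rw [← mul_assoc, ENNReal.div_mul_cancel two_ne_zero ENNReal.ofNat_ne_top, mul_comm]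
  have hsum : ∑' j, μ.restrict A (bad j) ≠ ∞ := by
    refine ne_top_of_le_ne_top ?_ (ENNReal.tsum_le_tsum hbad)
    rw [ENNReal.tsum_mul_left]
    exact ENNReal.mul_ne_top ENNReal.ofNat_ne_top hεsum
  filter_upwards [ae_imp_of_ae_restrict (ae_eventually_notMem hsum)] with x hx hxA
  filter_upwards [hx hxA] with j hj
  exact not_le.1 hj

end Fubini

theorem MeasureTheory.measure_inter_pos_of_measure_sdiff_add_lt {X : Type*} [MeasurableSpace X]
    {μ : Measure X} {V P Q : Set X} (h : μ (V \ P) + μ (V \ Q) < μ V) : 0 < μ (P ∩ Q) := by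
  refine pos_iff_ne_zero.2 fun h0 ↦ h.not_ge ?_
  calc μ V ≤ μ (V \ P ∪ V \ Q ∪ P ∩ Q) := measure_mono fun x hx ↦ by
        by_cases hP : x ∈ P <;> by_cases hQ : x ∈ Q <;> simp_all
    _ ≤ μ (V \ P) + μ (V \ Q) + μ (P ∩ Q) :=
        (measure_union_le _ _).trans (add_le_add_left (measure_union_le _ _) _)
    _ = μ (V \ P) + μ (V \ Q) := by rw [h0, add_zero]

theorem MeasureTheory.measure_inter_preimage_sub_pos {G : Type*} [AddCommGroup G]
    [MeasurableSpace G] [MeasurableAdd G] {m : Measure G} [m.IsAddLeftInvariant]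
    {A B V : Set G} {c d : G} (hc : m (V \ (c + ·) ⁻¹' A) < m V / 2)
    (hd : m (V \ (d - ·) ⁻¹' B) < m V / 2) :
    0 < m (A ∩ (c + d - ·) ⁻¹' B) := by
  have hpos : 0 < m ((c + ·) ⁻¹' A ∩ (d - ·) ⁻¹' B) :=
    measure_inter_pos_of_measure_sdiff_add_lt <|
      ENNReal.add_halves (m V) ▸ ENNReal.add_lt_add hc hd
  have hshift : (c + ·) ⁻¹' (A ∩ (c + d - ·) ⁻¹' B) = (c + ·) ⁻¹' A ∩ (d - ·) ⁻¹' B := by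
    ext v
    simp [add_sub_add_left_eq_sub]
  rwa [← hshift, measure_preimage_add] at hpos

theorem MeasureTheory.integral_mul_pos_of_mem_Icc {X : Type*} [MeasurableSpace X]
    {μ : Measure X} [IsFiniteMeasure μ] {f h : X → ℝ} (hf : Measurable f) (hh : Measurable h)
    (hf01 : ∀ x, f x ∈ Icc (0 : ℝ) 1) (hh01 : ∀ x, h x ∈ Icc (0 : ℝ) 1)
    (hpos : 0 < μ ({x | 0 < f x} ∩ {x | 0 < h x})) :
    0 < ∫ x, f x * h x ∂μ := by
  have hfh : Integrable (fun x ↦ f x * h x) μ := by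
    refine .of_bound (hf.mul hh).aestronglyMeasurable 1 (.of_forall fun x ↦ ?_)
    rw [Real.norm_eq_abs, abs_mul, abs_of_nonneg (hf01 x).1, abs_of_nonneg (hh01 x).1]
    exact mul_le_one₀ (hf01 x).2 (hh01 x).1 (hh01 x).2
  rw [integral_pos_iff_support_of_nonneg (fun x ↦ mul_nonneg (hf01 x).1 (hh01 x).1) hfh]
  exact hpos.trans_le <| measure_mono fun x hx ↦ (mul_pos hx.1 hx.2).ne'

section SigmaCompact

theorem IsSigmaCompact.add {G : Type*} [AddGroup G] [TopologicalSpace G] [ContinuousAdd G]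
    {s t : Set G} (hs : IsSigmaCompact s) (ht : IsSigmaCompact t) : IsSigmaCompact (s + t) := by
  obtain ⟨K, hK, rfl⟩ := hs
  obtain ⟨L, hL, rfl⟩ := ht
  rw [iUnion_add]
  simp_rw [add_iUnion]
  exact isSigmaCompact_iUnion _ fun i ↦ isSigmaCompact_iUnion _ fun j ↦
    ((hK i).add (hL j)).isSigmaCompact

theorem IsSigmaCompact.measurableSet {X : Type*} [TopologicalSpace X] [T2Space X]
    [MeasurableSpace X] [OpensMeasurableSpace X] {s : Set X} (hs : IsSigmaCompact s) :
    MeasurableSet s := by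
  obtain ⟨K, hK, rfl⟩ := hs
  exact .iUnion fun n ↦ (hK n).measurableSet

variable {X : Type*} [TopologicalSpace X] [T2Space X] [MeasurableSpace X]
  [OpensMeasurableSpace X] {μ : Measure X} [μ.InnerRegularCompactLTTop]

theorem MeasurableSet.exists_isSigmaCompact_subset_measure_eq {A : Set X} (hA : MeasurableSet A)
    (hμA : μ A ≠ ∞) : ∃ K ⊆ A, IsSigmaCompact K ∧ μ K = μ A := by
  choose K hKA hK hμK using fun n : ℕ ↦
    hA.exists_isCompact_sdiff_lt hμA (ENNReal.inv_ne_zero.2 (ENNReal.natCast_ne_top n))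
  refine ⟨⋃ n, K n, iUnion_subset hKA, isSigmaCompact_iUnion_of_isCompact K hK,
    measure_eq_measure_of_null_sdiff (iUnion_subset hKA) ?_⟩
  by_contra hne
  obtain ⟨n, hn⟩ := ENNReal.exists_inv_nat_lt hne
  exact (hμK n).not_ge <| hn.le.trans <| measure_mono <| sdiff_subset_sdiff_right <|
    subset_iUnion K n

theorem MeasurableSet.exists_isSigmaCompact_subset_forall_measure_eq {A : Set X}
    (hA : MeasurableSet A) (hμA : μ A ≠ ∞) {P : X → Prop} (hP : ∀ᵐ x ∂μ, x ∈ A → P x) :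
    ∃ K ⊆ A, IsSigmaCompact K ∧ (∀ x ∈ K, P x) ∧ μ K = μ A := by
  let N := toMeasurable μ {x | ¬(x ∈ A → P x)}
  have hN : μ N = 0 := by rw [measure_toMeasurable]; exact hP
  obtain ⟨K, hKA, hK, hμK⟩ :=
    (hA.diff (measurableSet_toMeasurable μ _)).exists_isSigmaCompact_subset_measure_eq
      (ne_top_of_le_ne_top hμA (measure_mono sdiff_subset))
  refine ⟨K, hKA.trans sdiff_subset, hK, fun x hx ↦ ?_, hμK.trans (measure_sdiff_null hN)⟩
  by_contra hPx
  exact (hKA hx).2 (subset_toMeasurable μ _ fun hx' ↦ hPx (hx' (hKA hx).1))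

end SigmaCompact

theorem convolution_to_sumset_general
    {G : Type*} [AddCommGroup G] [TopologicalSpace G] [IsTopologicalAddGroup G]
    [CompactSpace G] [TopologicalSpace.MetrizableSpace G]
    [MeasurableSpace G] [BorelSpace G]
    (m : Measure G) [m.IsAddHaarMeasure] [IsProbabilityMeasure m]
    (f g : G → ℝ) (hf : Measurable f) (hg : Measurable g)
    (hf01 : ∀ x, f x ∈ Set.Icc (0 : ℝ) 1) (hg01 : ∀ x, g x ∈ Set.Icc (0 : ℝ) 1) :
    ∃ C D : Set G, MeasurableSet C ∧ MeasurableSet D ∧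
      C ⊆ {x | 0 < f x} ∧ D ⊆ {x | 0 < g x} ∧
      m C = m {x | 0 < f x} ∧ m D = m {x | 0 < g x} ∧
      MeasurableSet (C + D) ∧
      C + D ⊆ {x | 0 < ∫ t, f t * g (x - t) ∂m} := by
  have hC₀ : MeasurableSet {x | 0 < f x} := measurableSet_lt measurable_const hf
  have hD₀ : MeasurableSet {x | 0 < g x} := measurableSet_lt measurable_const hg
  have hsmall : ∀ j : ℕ, ∀ᶠ v in 𝓝 (0 : G),
      m ({x | 0 < f x} \ (· + v) ⁻¹' {x | 0 < f x}) ≤ 2⁻¹ ^ j ∧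
      m ({x | 0 < g x} \ (· - v) ⁻¹' {x | 0 < g x}) ≤ 2⁻¹ ^ j := fun j ↦
    have hε : (0 : ℝ≥0∞) < 2⁻¹ ^ j := ENNReal.pow_pos (ENNReal.inv_pos.2 ENNReal.ofNat_ne_top) j
    ((tendsto_measure_sdiff_preimage_add_right hC₀ (measure_ne_top m _)).eventually
        (ge_mem_nhds hε)).and
      ((tendsto_measure_sdiff_preimage_sub_right hD₀ (measure_ne_top m _)).eventually
        (ge_mem_nhds hε))
  choose V hV hVsmall using fun j ↦ (nhds_basis_opens (0 : G)).eventually_iff.1 (hsmall j)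
  have hVm : ∀ j, MeasurableSet (V j) := fun j ↦ (hV j).2.measurableSet
  have hV0 : ∀ j, m (V j) ≠ 0 := fun j ↦ (hV j).2.measure_ne_zero m ⟨0, (hV j).1⟩
  have hsum : ∑' j : ℕ, (2⁻¹ : ℝ≥0∞) ^ j ≠ ∞ := by
    rw [ENNReal.tsum_geometric, ENNReal.one_sub_inv_two, inv_inv]
    exact ENNReal.ofNat_ne_top
  obtain ⟨C, hCf, hC, hCgood, hmC⟩ := hC₀.exists_isSigmaCompact_subset_forall_measure_eq
    (measure_ne_top m _) <| ae_eventually_measure_sdiff_preimage_lt_half (k := (· + ·))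
      measurable_add hC₀ hVm hV0 (fun _ ↦ measure_ne_top m _) hsum fun j _ hv ↦ (hVsmall j hv).1
  obtain ⟨D, hDg, hD, hDgood, hmD⟩ := hD₀.exists_isSigmaCompact_subset_forall_measure_eq
    (measure_ne_top m _) <| ae_eventually_measure_sdiff_preimage_lt_half (k := (· - ·))
      measurable_sub hD₀ hVm hV0 (fun _ ↦ measure_ne_top m _) hsum fun j _ hv ↦ (hVsmall j hv).2
  refine ⟨C, D, hC.measurableSet, hD.measurableSet, hCf, hDg, hmC, hmD,
    (hC.add hD).measurableSet, ?_⟩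
  rintro _ ⟨c, hc, d, hd, rfl⟩
  obtain ⟨j, hcj, hdj⟩ := ((hCgood c hc).and (hDgood d hd)).exists
  exact integral_mul_pos_of_mem_Icc hf (hg.comp (measurable_const.sub measurable_id)) hf01
    (fun t ↦ hg01 _) (measure_inter_preimage_sub_pos hcj hdj)

/-- in a compact metrizable abelian group with Haar probability measure `m`,
the supports of `f, g : G → [0,1]` contain Borel sets `C, D` of full measure such that
`C + D` is Borel and contained in the support of the convolution `f * g`. -/
theorem convolution_to_sumset
    {G : Type*} [AddCommGroup G] [TopologicalSpace G] [IsTopologicalAddGroup G]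
    [CompactSpace G] [T2Space G] [TopologicalSpace.MetrizableSpace G]
    [MeasurableSpace G] [BorelSpace G]
    (m : Measure G) [m.IsAddHaarMeasure] [IsProbabilityMeasure m]
    (f g : G → ℝ) (hf : Measurable f) (hg : Measurable g)
    (hf01 : ∀ x, f x ∈ Set.Icc (0 : ℝ) 1) (hg01 : ∀ x, g x ∈ Set.Icc (0 : ℝ) 1) :
    ∃ C D : Set G, MeasurableSet C ∧ MeasurableSet D ∧
      C ⊆ {x | 0 < f x} ∧ D ⊆ {x | 0 < g x} ∧
      m C = m {x | 0 < f x} ∧ m D = m {x | 0 < g x} ∧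
      MeasurableSet (C + D) ∧
      C + D ⊆ {x | 0 < ∫ t, f t * g (x - t) ∂m} :=
  convolution_to_sumset_general m f g hf hg hf01 hg01
end

section
/- Let G be an abelian group with translation invariant probability measure ν, and let A = τ⁻¹(I), B = τ⁻¹(J) be parallel Bohr intervals (τ : G → 𝕋 a surjective ν-measurable homomorphism, I, J ⊆ 𝕋 closed intervals) with ν(A) + ν(B) < 1. Then {g ∈ G : g + B ⊆ A + B} = A and {g ∈ G : g + A ⊆ A + B} = B. -/
open Pointwise

section CircleAux

open Set

lemma BIM.coe_eq_coe' (x y : ℝ) : (↑x : UnitAddCircle) = ↑y ↔ ∃ k : ℤ, y = x + k := by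
  constructor
  · intro h
    have := (QuotientAddGroup.eq_iff_sub_mem ..).mp h.symm
    obtain ⟨k, hk⟩ := AddSubgroup.mem_zmultiples_iff.mp this
    rw [zsmul_eq_mul, mul_one] at hk
    exact ⟨k, by linarith⟩
  · rintro ⟨k, rfl⟩
    symm
    rw [QuotientAddGroup.eq_iff_sub_mem]
    exact AddSubgroup.mem_zmultiples_iff.mpr ⟨k, by rw [zsmul_eq_mul, mul_one]; ring⟩

lemma BIM.mem_arc {x y z : ℝ} :
    (↑x : UnitAddCircle) ∈ (fun r : ℝ => (r : UnitAddCircle)) '' Icc y z ↔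
      ∃ k : ℤ, y ≤ x + k ∧ x + k ≤ z := by
  constructor
  · rintro ⟨r, ⟨h1, h2⟩, hr⟩
    obtain ⟨k, hk⟩ := (BIM.coe_eq_coe' x r).mp hr.symm
    exact ⟨k, by constructor <;> linarith⟩
  · rintro ⟨k, h1, h2⟩
    exact ⟨x + k, ⟨h1, h2⟩, ((BIM.coe_eq_coe' x (x + k)).mpr ⟨k, rfl⟩).symm⟩

lemma BIM.arc_disjoint {u v u' v' : ℝ} (huv : v < u') (hspan : v' - u < 1) :
    Disjoint ((fun r : ℝ => (r : UnitAddCircle)) '' Icc u v)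
      ((fun r : ℝ => (r : UnitAddCircle)) '' Icc u' v') := by
  rw [disjoint_left]
  rintro z ⟨r, ⟨hr1, hr2⟩, rfl⟩ hz
  obtain ⟨k, hk1, hk2⟩ := BIM.mem_arc.mp hz
  have hk0 : (0:ℝ) < k := by linarith
  have hk1' : (k:ℝ) < 1 := by linarith
  have h1 : (0:ℤ) < k := by exact_mod_cast hk0
  have h2 : (k:ℤ) < 1 := by exact_mod_cast hk1'
  omega

lemma BIM.arc_subset_iff {x y m L : ℝ} (hm : 0 ≤ m) (h1 : L < 1) :
    ((fun r : ℝ => (r : UnitAddCircle)) '' Icc x (x + m)) ⊆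
      ((fun r : ℝ => (r : UnitAddCircle)) '' Icc y (y + L)) ↔
    ∃ k : ℤ, y ≤ x + k ∧ x + m + k ≤ y + L := by
  constructor
  · intro h
    obtain ⟨k, hk1, hk2⟩ := BIM.mem_arc.mp (h ⟨x, ⟨le_refl x, by linarith⟩, rfl⟩)
    by_cases hc : x + m + k ≤ y + L
    · exact ⟨k, hk1, hc⟩
    push_neg at hc
    exfalso
    set w := (y + L + min (x + k + m) (y + 1)) / 2 with hw
    have hmin1 : y + L < min (x + k + m) (y + 1) := lt_min (by linarith) (by linarith)
    have hw1 : y + L < w := by rw [hw]; linarith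
    have hw2 : w < y + 1 := by
      have := min_le_right (x + k + m) (y + 1); rw [hw]; linarith
    have hw3 : w < x + k + m := by
      have := min_le_left (x + k + m) (y + 1); rw [hw]; linarith
    have hwmem : w - k ∈ Icc x (x + m) := ⟨by linarith, by linarith⟩
    obtain ⟨j, hj1, hj2⟩ := BIM.mem_arc.mp (h ⟨w - k, hwmem, rfl⟩)
    rcases le_or_gt ((j : ℝ) - k) (-1) with hi | hi
    · linarith
    · have h0 : (0 : ℤ) ≤ j - k := by
        have hc1 : ((-1 : ℤ) : ℝ) < ((j - k : ℤ) : ℝ) := by push_cast; linarith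
        have hc2 : (-1 : ℤ) < j - k := by exact_mod_cast hc1
        omega
      have : (0 : ℝ) ≤ (j : ℝ) - (k : ℝ) := by exact_mod_cast h0
      linarith
  · rintro ⟨k, h1, h2⟩ z ⟨r, ⟨hr1, hr2⟩, rfl⟩
    exact BIM.mem_arc.mpr ⟨k, by constructor <;> linarith⟩

lemma BIM.vadd_coe_image (c : ℝ) (S : Set ℝ) :
    (↑c : UnitAddCircle) +ᵥ (fun r : ℝ => (r : UnitAddCircle)) '' S
      = (fun r : ℝ => (r : UnitAddCircle)) '' (c +ᵥ S) := by
  ext z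
  simp only [Set.mem_vadd_set, Set.mem_image]
  constructor
  · rintro ⟨_, ⟨r, hr, rfl⟩, rfl⟩
    exact ⟨c + r, ⟨r, hr, rfl⟩, rfl⟩
  · rintro ⟨_, ⟨r, hr, rfl⟩, rfl⟩
    exact ⟨↑r, ⟨r, hr, rfl⟩, rfl⟩

lemma BIM.coe_image_add (S T : Set ℝ) :
    (fun r : ℝ => (r : UnitAddCircle)) '' (S + T)
      = (fun r : ℝ => (r : UnitAddCircle)) '' S + (fun r : ℝ => (r : UnitAddCircle)) '' T :=
  Set.image_add (QuotientAddGroup.mk' (AddSubgroup.zmultiples (1:ℝ)))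

lemma BIM.cover_Icc (N : ℕ) (hN : 0 < N) {r : ℝ} (hr : r ∈ Icc (0:ℝ) 1) :
    ∃ i : ℕ, i < N ∧ r ∈ Icc ((i:ℝ)/N) ((i+1)/N) := by
  obtain ⟨hr0, hr1⟩ := hr
  have hN' : (0:ℝ) < N := by exact_mod_cast hN
  by_cases h : r = 1
  · refine ⟨N - 1, by omega, ?_, ?_⟩
    · rw [h]
      rw [div_le_one hN']
      have : ((N - 1 : ℕ) : ℝ) = (N:ℝ) - 1 := by
        have : (1:ℕ) ≤ N := hN
        push_cast [this]; ring
      rw [this]; linarith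
    · rw [h, le_div_iff₀ hN']
      have : ((N - 1 : ℕ) : ℝ) = (N:ℝ) - 1 := by
        have : (1:ℕ) ≤ N := hN
        push_cast [this]; ring
      rw [this]; linarith
  · have hrlt : r < 1 := lt_of_le_of_ne hr1 h
    set j := ⌊r * N⌋.toNat with hj
    have h0 : (0:ℤ) ≤ ⌊r * N⌋ := Int.floor_nonneg.mpr (by positivity)
    have hcast : ((j:ℤ):ℝ) = (⌊r * N⌋ : ℝ) := by
      rw [hj]; exact_mod_cast congrArg (fun z : ℤ => (z:ℝ)) (Int.toNat_of_nonneg h0)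
    have hle : (j:ℝ) ≤ r * N := by
      rw [show ((j:ℕ):ℝ) = ((j:ℤ):ℝ) by push_cast; ring, hcast]
      exact Int.floor_le _
    have hlt : r * N < (j:ℝ) + 1 := by
      rw [show ((j:ℕ):ℝ) = ((j:ℤ):ℝ) by push_cast; ring, hcast]
      exact Int.lt_floor_add_one _
    have hjN : j < N := by
      by_contra hc
      push_neg at hc
      have : (N:ℝ) ≤ (j:ℝ) := by exact_mod_cast hc
      nlinarith
    exact ⟨j, hjN, by rw [div_le_iff₀ hN']; linarith, by rw [le_div_iff₀ hN']; linarith⟩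

end CircleAux

section FAMAux

open Set

variable {G : Type*} [AddCommGroup G] (μ : FAM G)

lemma BIM.meas_inter {A B : Set G} (hA : μ.Meas A) (hB : μ.Meas B) : μ.Meas (A ∩ B) := by
  have := μ.meas_compl (μ.meas_union (μ.meas_compl hA) (μ.meas_compl hB))
  rwa [compl_union, compl_compl, compl_compl] at this

lemma BIM.meas_univ : μ.Meas Set.univ := by
  have := μ.meas_compl μ.meas_empty
  rwa [compl_empty] at this

lemma BIM.m_union_le {A B : Set G} (hA : μ.Meas A) (hB : μ.Meas B) :
    μ.m (A ∪ B) ≤ μ.m A + μ.m B := by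
  have hBA : μ.Meas (B ∩ Aᶜ) := BIM.meas_inter μ hB (μ.meas_compl hA)
  have : A ∪ B = A ∪ (B ∩ Aᶜ) := by
    ext x; by_cases hx : x ∈ A <;> simp [hx]
  rw [this, μ.m_union hA hBA (disjoint_left.mpr fun x hx hx2 => hx2.2 hx)]
  exact add_le_add le_rfl (μ.m_mono hBA hB inter_subset_left)

lemma BIM.meas_biUnion (f : ℕ → Set G) (n : ℕ) (hm : ∀ i, i < n → μ.Meas (f i)) :
    μ.Meas (⋃ i ∈ Finset.range n, f i) := by
  induction n with
  | zero => simpa using μ.meas_empty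
  | succ n ih =>
      rw [Finset.range_add_one, Finset.set_biUnion_insert]
      exact μ.meas_union (hm n (by omega)) (ih fun i hi => hm i (by omega))

lemma BIM.m_biUnion_le (f : ℕ → Set G) (n : ℕ) (hm : ∀ i, i < n → μ.Meas (f i)) :
    μ.m (⋃ i ∈ Finset.range n, f i) ≤ ∑ i ∈ Finset.range n, μ.m (f i) := by
  induction n with
  | zero => simpa using μ.m_empty.le
  | succ n ih =>
      rw [Finset.range_add_one, Finset.set_biUnion_insert, Finset.sum_insert (by simp)]
      calc μ.m (f n ∪ ⋃ i ∈ Finset.range n, f i)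
          ≤ μ.m (f n) + μ.m (⋃ i ∈ Finset.range n, f i) :=
            BIM.m_union_le μ (hm n (by omega)) (BIM.meas_biUnion μ f n fun i hi => hm i (by omega))
        _ ≤ _ := add_le_add le_rfl (ih fun i hi => hm i (by omega))

lemma BIM.m_biUnion_eq (f : ℕ → Set G) (n : ℕ) (hm : ∀ i, i < n → μ.Meas (f i))
    (hd : ∀ i j, i < n → j < n → i ≠ j → Disjoint (f i) (f j)) :
    μ.m (⋃ i ∈ Finset.range n, f i) = ∑ i ∈ Finset.range n, μ.m (f i) := by
  induction n with
  | zero => simpa using μ.m_empty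
  | succ n ih =>
      rw [Finset.range_add_one, Finset.set_biUnion_insert, Finset.sum_insert (by simp)]
      rw [μ.m_union (hm n (by omega)) (BIM.meas_biUnion μ f n fun i hi => hm i (by omega))
        (disjoint_iUnion₂_right.mpr fun i hi =>
          hd n i (by omega) (by simp at hi; omega) (by simp at hi; omega))]
      rw [ih (fun i hi => hm i (by omega)) (fun i j h1 h2 h3 => hd i j (by omega) (by omega) h3)]

variable (τ : G →+ UnitAddCircle)

lemma BIM.preimage_vadd' (g : G) (S : Set UnitAddCircle) :
    g +ᵥ τ ⁻¹' S = τ ⁻¹' (τ g +ᵥ S) := by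
  ext h
  simp only [Set.mem_vadd_set, Set.mem_preimage]
  constructor
  · rintro ⟨y, hy, rfl⟩
    exact ⟨τ y, hy, by simp [vadd_eq_add]⟩
  · rintro ⟨s, hs, hgs⟩
    refine ⟨h - g, ?_, show g + (h - g) = h by abel⟩
    have : τ (h - g) = s := by
      rw [vadd_eq_add] at hgs
      rw [map_sub, ← hgs]
      abel
    rwa [this]

lemma BIM.preimage_add' (hsurj : Function.Surjective τ) (S T : Set UnitAddCircle) :
    τ ⁻¹' S + τ ⁻¹' T = τ ⁻¹' (S + T) := by
  ext g
  constructor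
  · rintro ⟨u, hu, v, hv, rfl⟩
    exact ⟨τ u, hu, τ v, hv, (map_add τ u v).symm⟩
  · rintro ⟨s, hs, t, ht, hst⟩
    obtain ⟨u, hu⟩ := hsurj s
    refine ⟨u, by rwa [Set.mem_preimage, hu], g - u, ?_, show u + (g - u) = g by abel⟩
    have hst' : s + t = τ g := hst
    have : τ (g - u) = t := by
      rw [map_sub, hu, ← hst']
      abel
    show τ (g - u) ∈ T
    rwa [this]

variable (hτ : ∀ U : Set UnitAddCircle, IsOpen U → μ.Meas (τ ⁻¹' U))

include hτ in
lemma BIM.meas_preimage_closed {F : Set UnitAddCircle} (hF : IsClosed F) :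
    μ.Meas (τ ⁻¹' F) := by
  have := μ.meas_compl (hτ Fᶜ hF.isOpen_compl)
  rwa [← preimage_compl, compl_compl] at this

include hτ in
lemma BIM.meas_arc (u v : ℝ) :
    μ.Meas (τ ⁻¹' ((fun r : ℝ => (r : UnitAddCircle)) '' Icc u v)) :=
  BIM.meas_preimage_closed μ τ hτ
    (isCompact_Icc.image (AddCircle.continuous_mk' 1)).isClosed

variable (hsurj : Function.Surjective τ)

include hsurj in
lemma BIM.m_preimage_vadd (x : UnitAddCircle) (S : Set UnitAddCircle)
    (hS : μ.Meas (τ ⁻¹' S)) : μ.m (τ ⁻¹' (x +ᵥ S)) = μ.m (τ ⁻¹' S) := by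
  obtain ⟨g, rfl⟩ := hsurj x
  rw [← BIM.preimage_vadd' τ g S]
  exact μ.m_vadd g hS

include hτ hsurj in
lemma BIM.m_arc_eq (c u v : ℝ) :
    μ.m (τ ⁻¹' ((fun r : ℝ => (r : UnitAddCircle)) '' Icc (c + u) (c + v)))
      = μ.m (τ ⁻¹' ((fun r : ℝ => (r : UnitAddCircle)) '' Icc u v)) := by
  have h1 : (fun r : ℝ => (r : UnitAddCircle)) '' Icc (c + u) (c + v)
      = (↑c : UnitAddCircle) +ᵥ (fun r : ℝ => (r : UnitAddCircle)) '' Icc u v := by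
    rw [BIM.vadd_coe_image, Set.vadd_Icc]
  rw [h1]
  exact BIM.m_preimage_vadd μ τ hsurj _ _ (BIM.meas_arc μ τ hτ u v)

include hτ hsurj in
lemma BIM.q_lower (hprob : μ.m Set.univ = 1) (N : ℕ) (hN : 0 < N) :
    ((N : ENNReal))⁻¹ ≤ μ.m (τ ⁻¹' ((fun r : ℝ => (r : UnitAddCircle)) '' Icc 0 (1 / N))) := by
  set q := μ.m (τ ⁻¹' ((fun r : ℝ => (r : UnitAddCircle)) '' Icc 0 (1 / N))) with hq
  have hN' : (0:ℝ) < N := by exact_mod_cast hN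
  set f : ℕ → Set G := fun i => τ ⁻¹' ((fun r : ℝ => (r : UnitAddCircle)) '' Icc ((i:ℝ)/N) ((i+1)/N)) with hf
  have hm : ∀ i, i < N → μ.Meas (f i) := fun i _ => BIM.meas_arc μ τ hτ _ _
  have hcov : (Set.univ : Set G) ⊆ ⋃ i ∈ Finset.range N, f i := by
    intro g _
    have : τ g ∈ (fun r : ℝ => (r : UnitAddCircle)) '' Icc 0 1 := by
      rw [show ((fun r : ℝ => (r : UnitAddCircle)) '' Icc 0 1) = Set.univ by
        simpa using AddCircle.coe_image_Icc_eq (1:ℝ) 0]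
      trivial
    obtain ⟨r, hr, hrg⟩ := this
    obtain ⟨i, hiN, hri⟩ := BIM.cover_Icc N hN hr
    exact Set.mem_biUnion (Finset.mem_range.mpr hiN) (by exact ⟨r, hri, hrg⟩)
  have heach : ∀ i, i < N → μ.m (f i) = q := by
    intro i _
    have key := BIM.m_arc_eq μ τ hτ hsurj ((i:ℝ)/N) 0 (1/N)
    simp only [add_zero] at key
    simp only [hf]
    rw [show ((i:ℝ)+1)/N = (i:ℝ)/N + 1/N by ring]
    exact key
  have hone : (1 : ENNReal) ≤ (N : ENNReal) * q := by
    calc (1 : ENNReal) = μ.m Set.univ := hprob.symm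
      _ ≤ μ.m (⋃ i ∈ Finset.range N, f i) :=
          μ.m_mono (BIM.meas_univ μ) (BIM.meas_biUnion μ f N hm) hcov
      _ ≤ ∑ i ∈ Finset.range N, μ.m (f i) := BIM.m_biUnion_le μ f N hm
      _ = ∑ i ∈ Finset.range N, q := Finset.sum_congr rfl fun i hi =>
          heach i (Finset.mem_range.mp hi)
      _ = (N : ENNReal) * q := by simp [mul_comm]
  have hNne : (N : ENNReal) ≠ 0 := Nat.cast_ne_zero.mpr (by omega)
  have hNnt : (N : ENNReal) ≠ ⊤ := ENNReal.natCast_ne_top N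
  calc ((N : ENNReal))⁻¹ = (N : ENNReal)⁻¹ * 1 := (mul_one _).symm
    _ ≤ (N : ENNReal)⁻¹ * ((N : ENNReal) * q) := mul_le_mul_right hone _
    _ = ((N : ENNReal)⁻¹ * (N : ENNReal)) * q := (mul_assoc ..).symm
    _ = q := by rw [ENNReal.inv_mul_cancel hNne hNnt, one_mul]

include hτ hsurj in
lemma BIM.m_arc_lower (hprob : μ.m Set.univ = 1) {a b : ℝ} (hab : 0 < b - a) (hab1 : b - a ≤ 1) :
    ENNReal.ofReal (b - a) ≤ μ.m (τ ⁻¹' ((fun r : ℝ => (r : UnitAddCircle)) '' Icc a b)) := by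
  by_contra hcon
  push_neg at hcon
  set MA := μ.m (τ ⁻¹' ((fun r : ℝ => (r : UnitAddCircle)) '' Icc a b)) with hMA
  have hne : MA ≠ ⊤ := (hcon.trans ENNReal.ofReal_lt_top).ne
  have hr : MA.toReal < b - a := by
    have := ENNReal.toReal_lt_toReal hne ENNReal.ofReal_ne_top |>.mpr hcon
    rwa [ENNReal.toReal_ofReal hab.le] at this
  obtain ⟨q, hq1, hq2⟩ := exists_rat_btwn hr
  have hq0 : (0:ℚ) < q := by
    have h0 : (0:ℝ) ≤ MA.toReal := ENNReal.toReal_nonneg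
    have : (0:ℝ) < (q:ℝ) := h0.trans_lt hq1
    exact_mod_cast this
  set k := q.num.toNat with hk
  set N := q.den with hNdef
  have hk0 : 0 < k := by
    have : 0 < q.num := Rat.num_pos.mpr hq0
    omega
  have hN0 : 0 < N := q.pos
  have hk' : (0:ℝ) < (k:ℝ) := by exact_mod_cast hk0
  have hN' : (0:ℝ) < (N:ℝ) := by exact_mod_cast hN0
  have hkN : (k:ℝ)/(N:ℝ) = (q:ℝ) := by
    rw [Rat.cast_def]
    congr 1
    have : 0 ≤ q.num := (Rat.num_pos.mpr hq0).le
    rw [hk]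
    exact_mod_cast congrArg (fun z : ℤ => (z:ℝ)) (Int.toNat_of_nonneg this)
  have hkNlt : (k:ℝ)/(N:ℝ) < b - a := by rw [hkN]; exact hq2
  set t := (b - a)/(k:ℝ) with ht
  have ht0 : 0 < t := div_pos hab hk'
  have hkt : (k:ℝ) * t = b - a := by
    rw [ht]; field_simp
  have htN : 1/(N:ℝ) < t := by
    rw [ht, div_lt_div_iff₀ hN' hk']
    have := (div_lt_iff₀ hN').mp hkNlt
    nlinarith
  set f : ℕ → Set G := fun i =>
    τ ⁻¹' ((fun r : ℝ => (r : UnitAddCircle)) '' Icc (a + i*t) (a + i*t + 1/N)) with hf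
  have hm : ∀ i, i < k → μ.Meas (f i) := fun i _ => BIM.meas_arc μ τ hτ _ _
  have hdlt : ∀ i j, i < j → j < k → Disjoint (f i) (f j) := by
    intro i j hij hjk
    have hij' : (i:ℝ) + 1 ≤ (j:ℝ) := by exact_mod_cast hij
    have hjk' : (j:ℝ) ≤ (k:ℝ) - 1 := by
      have : (j:ℝ) + 1 ≤ (k:ℝ) := by exact_mod_cast hjk
      linarith
    refine Disjoint.preimage _ (BIM.arc_disjoint ?_ ?_)
    · nlinarith
    · nlinarith
  have hd : ∀ i j, i < k → j < k → i ≠ j → Disjoint (f i) (f j) := by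
    intro i j hik hjk hne'
    rcases lt_or_gt_of_ne hne' with h | h
    · exact hdlt i j h hjk
    · exact (hdlt j i h hik).symm
  have hsub : (⋃ i ∈ Finset.range k, f i) ⊆ τ ⁻¹' ((fun r : ℝ => (r : UnitAddCircle)) '' Icc a b) := by
    refine Set.iUnion₂_subset fun i hi => ?_
    have hik : i < k := Finset.mem_range.mp hi
    have hik' : (i:ℝ) ≤ (k:ℝ) - 1 := by
      have : (i:ℝ) + 1 ≤ (k:ℝ) := by exact_mod_cast hik
      linarith
    refine Set.preimage_mono (Set.image_mono (Set.Icc_subset_Icc ?_ ?_))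
    · nlinarith
    · nlinarith
  set qN := μ.m (τ ⁻¹' ((fun r : ℝ => (r : UnitAddCircle)) '' Icc 0 (1 / N))) with hqN
  have heach : ∀ i, i < k → μ.m (f i) = qN := by
    intro i _
    have key := BIM.m_arc_eq μ τ hτ hsurj (a + i*t) 0 (1/N)
    simp only [add_zero] at key
    simp only [hf]
    exact key
  have hlow : (k:ENNReal) * ((N:ENNReal))⁻¹ ≤ MA := by
    calc (k:ENNReal) * ((N:ENNReal))⁻¹
        ≤ (k:ENNReal) * qN := mul_le_mul_right (BIM.q_lower μ τ hτ hsurj hprob N hN0) _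
      _ = ∑ i ∈ Finset.range k, μ.m (f i) := by
          rw [Finset.sum_congr rfl fun i hi => heach i (Finset.mem_range.mp hi)]
          simp [mul_comm]
      _ = μ.m (⋃ i ∈ Finset.range k, f i) := (BIM.m_biUnion_eq μ f k hm hd).symm
      _ ≤ MA := μ.m_mono (BIM.meas_biUnion μ f k hm) (BIM.meas_arc μ τ hτ a b) hsub
  have hofr : ENNReal.ofReal ((k:ℝ)/(N:ℝ)) = (k:ENNReal) * ((N:ENNReal))⁻¹ := by
    rw [ENNReal.ofReal_div_of_pos hN', div_eq_mul_inv, ENNReal.ofReal_natCast,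
      ENNReal.ofReal_natCast]
  have hMAlt : MA < ENNReal.ofReal ((k:ℝ)/(N:ℝ)) := by
    rw [hkN]
    refine (ENNReal.lt_ofReal_iff_toReal_lt hne).mpr hq1
  rw [hofr] at hMAlt
  exact absurd hlow (not_le.mpr hMAlt)

end FAMAux

open Set in
/-- if `A = τ⁻¹(I)`, `B = τ⁻¹(J)` are parallel Bohr intervals in `G`
(for a translation invariant probability measure `ν`) with `ν(A) + ν(B) < 1`, then
`{g : g + B ⊆ A + B} = A` and `{g : g + A ⊆ A + B} = B`. -/
theorem bohr_interval_movers {G : Type*} [AddCommGroup G] (μ : FAM G)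
    (hprob : μ.m Set.univ = 1)
    (τ : G →+ UnitAddCircle) (hsurj : Function.Surjective τ)
    (hτ : ∀ U : Set UnitAddCircle, IsOpen U → μ.Meas (τ ⁻¹' U))
    (a b c d : ℝ) (hab : 0 < b - a) (hab1 : b - a ≤ 1)
    (hcd : 0 < d - c) (hcd1 : d - c ≤ 1)
    (A B : Set G)
    (hA : A = τ ⁻¹' ((fun x : ℝ => (x : UnitAddCircle)) '' Set.Icc a b))
    (hB : B = τ ⁻¹' ((fun x : ℝ => (x : UnitAddCircle)) '' Set.Icc c d))
    (hsum : μ.m A + μ.m B < 1) :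
    {g : G | g +ᵥ B ⊆ A + B} = A ∧ {g : G | g +ᵥ A ⊆ A + B} = B := by
  have hL1 : (b - a) + (d - c) < 1 := by
    have h1 := BIM.m_arc_lower μ τ hτ hsurj hprob hab hab1
    have h2 := BIM.m_arc_lower μ τ hτ hsurj hprob hcd hcd1
    rw [← hA] at h1
    rw [← hB] at h2
    have hadd : ENNReal.ofReal ((b - a) + (d - c))
        = ENNReal.ofReal (b - a) + ENNReal.ofReal (d - c) := ENNReal.ofReal_add hab.le hcd.le
    have : ENNReal.ofReal ((b - a) + (d - c)) < 1 := by
      rw [hadd]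
      exact (add_le_add h1 h2).trans_lt hsum
    exact_mod_cast ENNReal.ofReal_lt_one.mp this
  have hAB : A + B = τ ⁻¹' ((fun x : ℝ => (x : UnitAddCircle)) '' Set.Icc (a + c) (b + d)) := by
    rw [hA, hB, BIM.preimage_add' τ hsurj, ← BIM.coe_image_add,
      Set.Icc_add_Icc (by linarith) (by linarith)]
  constructor
  · ext g
    simp only [Set.mem_setOf_eq]
    obtain ⟨s, hs⟩ := QuotientAddGroup.mk_surjective (τ g)
    rw [hAB, hB, BIM.preimage_vadd' τ g, ← hs, BIM.vadd_coe_image, Set.vadd_Icc,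
      hsurj.preimage_subset_preimage_iff]
    have key := BIM.arc_subset_iff (x := s + c) (m := d - c) (y := a + c)
      (L := (b - a) + (d - c)) hcd.le hL1
    rw [show s + c + (d - c) = s + d by ring, show a + c + ((b - a) + (d - c)) = b + d by ring]
      at key
    rw [key, hA]
    have : g ∈ τ ⁻¹' ((fun x : ℝ => (x : UnitAddCircle)) '' Set.Icc a b)
        ↔ (↑s : UnitAddCircle) ∈ (fun x : ℝ => (x : UnitAddCircle)) '' Set.Icc a b := by
      rw [Set.mem_preimage, ← hs]
    rw [this, BIM.mem_arc]
    constructor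
    · rintro ⟨k, h1, h2⟩
      exact ⟨k, by linarith, by linarith⟩
    · rintro ⟨k, h1, h2⟩
      exact ⟨k, by linarith, by linarith⟩
  · ext g
    simp only [Set.mem_setOf_eq]
    obtain ⟨s, hs⟩ := QuotientAddGroup.mk_surjective (τ g)
    rw [hAB, hA, BIM.preimage_vadd' τ g, ← hs, BIM.vadd_coe_image, Set.vadd_Icc,
      hsurj.preimage_subset_preimage_iff]
    have key := BIM.arc_subset_iff (x := s + a) (m := b - a) (y := a + c)
      (L := (b - a) + (d - c)) hab.le hL1
    rw [show s + a + (b - a) = s + b by ring, show a + c + ((b - a) + (d - c)) = b + d by ring]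
      at key
    rw [key, hB]
    have : g ∈ τ ⁻¹' ((fun x : ℝ => (x : UnitAddCircle)) '' Set.Icc c d)
        ↔ (↑s : UnitAddCircle) ∈ (fun x : ℝ => (x : UnitAddCircle)) '' Set.Icc c d := by
      rw [Set.mem_preimage, ← hs]
    rw [this, BIM.mem_arc]
    constructor
    · rintro ⟨k, h1, h2⟩
      exact ⟨k, by linarith, by linarith⟩
    · rintro ⟨k, h1, h2⟩
      exact ⟨k, by linarith, by linarith⟩
end

section
/- Let G be an abelian group with translation invariant probability measure ν. Let A, B ⊆ G satisfy ν_*(A+B) ≤ ν(A) + ν(B), and suppose Ĩ, J̃ ⊆ G are parallel Bohr intervals with ν(Ĩ) + ν(J̃) < 1, ν(A Δ Ĩ) = 0, and ν(B Δ J̃) = 0. Then A ⊆ Ĩ and B ⊆ J̃. -/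
open Pointwise

/-! Suppose some `x ∈ A` lies outside `Ĩ = τ⁻¹[a, b]`. Since `A` and `B` fill `Ĩ` and
`J̃ = τ⁻¹[c, d]` up to null sets and non-degenerate Bohr intervals have positive measure, there
are `y ∈ B` with `τ y` just above `c` and `e ∈ A` with `τ e` just below `b`. The translates
`y + (A ∩ Ĩ)` and `e + (B ∩ J̃)` lie in `τ⁻¹[a + c, b + d]` and overlap only in a short Bohr
interval, so together they have measure almost `ν(A) + ν(B)`. As `ν(Ĩ) + ν(J̃) < 1`, the arc
`[a + c, b + d]` misses part of the circle, and `τ x + [c, d]` reaches into that gap: for a suitable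
`[p, q] ⊆ [c, d]` the set `x + (B ∩ τ⁻¹[p, q])` is disjoint from both translates and outweighs
their overlap, giving a measurable subset of `A + B` of measure more than `ν(A) + ν(B)`.
Only comparisons between measures of Bohr intervals are needed, never their values `v - u`. -/

open Set

namespace FAM

variable {G : Type*} [AddCommGroup G] (μ : FAM G) {A B C S : Set G}

lemma meas_univ : μ.Meas univ := by simpa using μ.meas_compl μ.meas_empty

lemma meas_inter_s15 (hA : μ.Meas A) (hB : μ.Meas B) : μ.Meas (A ∩ B) := by
  simpa [compl_union] using μ.meas_compl (μ.meas_union (μ.meas_compl hA) (μ.meas_compl hB))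

lemma meas_diff_s15 (hA : μ.Meas A) (hB : μ.Meas B) : μ.Meas (A \ B) :=
  μ.meas_inter_s15 hA (μ.meas_compl hB)

lemma m_ne_top (hfin : μ.m univ ≠ ⊤) (hA : μ.Meas A) : μ.m A ≠ ⊤ :=
  ne_top_of_le_ne_top hfin (μ.m_mono hA μ.meas_univ (subset_univ A))

lemma m_diff_add_m_inter (hA : μ.Meas A) (hB : μ.Meas B) :
    μ.m (A \ B) + μ.m (A ∩ B) = μ.m A := by
  conv_rhs => rw [← sdiff_union_inter A B]
  exact (μ.m_union (μ.meas_diff_s15 hA hB) (μ.meas_inter_s15 hA hB) disjoint_sdiff_inter).symm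

lemma m_union_add_m_inter (hA : μ.Meas A) (hB : μ.Meas B) :
    μ.m (A ∪ B) + μ.m (A ∩ B) = μ.m A + μ.m B := by
  rw [← union_sdiff_self, μ.m_union hA (μ.meas_diff_s15 hB hA) disjoint_sdiff_right, add_assoc,
    inter_comm, μ.m_diff_add_m_inter hB hA]

lemma m_union_le (hA : μ.Meas A) (hB : μ.Meas B) : μ.m (A ∪ B) ≤ μ.m A + μ.m B :=
  le_self_add.trans (μ.m_union_add_m_inter hA hB).le

lemma m_eq_zero_of_subset_s15 (hA : μ.Meas A) (hB : μ.Meas B) (hAB : A ⊆ B) (hB0 : μ.m B = 0) :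
    μ.m A = 0 :=
  nonpos_iff_eq_zero.mp (hB0 ▸ μ.m_mono hA hB hAB)

lemma m_diff_eq_zero_of_m_union_diff_eq_zero (hA : μ.Meas A) (hB : μ.Meas B)
    (h : μ.m (A \ B ∪ B \ A) = 0) : μ.m (A \ B) = 0 ∧ μ.m (B \ A) = 0 := by
  have hAB := μ.meas_diff_s15 hA hB
  have hBA := μ.meas_diff_s15 hB hA
  exact ⟨μ.m_eq_zero_of_subset_s15 hAB (μ.meas_union hAB hBA) subset_union_left h,
    μ.m_eq_zero_of_subset_s15 hBA (μ.meas_union hAB hBA) subset_union_right h⟩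

lemma m_inter_eq_of_subset_of_m_diff_eq_zero (hA : μ.Meas A) (hC : μ.Meas C) (hS : μ.Meas S)
    (hCS : C ⊆ S) (hSA : μ.m (S \ A) = 0) : μ.m (A ∩ C) = μ.m C := by
  have hCA : μ.m (C \ A) = 0 :=
    μ.m_eq_zero_of_subset_s15 (μ.meas_diff_s15 hC hA) (μ.meas_diff_s15 hS hA) (sdiff_subset_sdiff_left hCS) hSA
  rw [inter_comm, ← μ.m_diff_add_m_inter hC hA, hCA, zero_add]

lemma m_le_inn (hC : μ.Meas C) (hCS : C ⊆ S) : μ.m C ≤ μ.inn S :=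
  le_iSup₂ (f := fun C (_ : μ.Meas C ∧ C ⊆ S) => μ.m C) C ⟨hC, hCS⟩

lemma m_add_m_lt_inn (hfin : μ.m univ ≠ ⊤) {X Y Z W : Set G} (hX : μ.Meas X) (hY : μ.Meas Y)
    (hZ : μ.Meas Z) (hW : μ.Meas W) (hXYW : X ∩ Y ⊆ W) (hWZ : μ.m W < μ.m Z)
    (hXYZ : Disjoint (X ∪ Y) Z) (hS : X ∪ Y ∪ Z ⊆ S) : μ.m X + μ.m Y < μ.inn S := by
  have hXY := μ.meas_union hX hY
  calc μ.m X + μ.m Y = μ.m (X ∪ Y) + μ.m (X ∩ Y) := (μ.m_union_add_m_inter hX hY).symm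
    _ ≤ μ.m (X ∪ Y) + μ.m W := by gcongr; exact μ.m_mono (μ.meas_inter_s15 hX hY) hW hXYW
    _ < μ.m (X ∪ Y) + μ.m Z := ENNReal.add_lt_add_left (μ.m_ne_top hfin hXY) hWZ
    _ = μ.m (X ∪ Y ∪ Z) := (μ.m_union hXY hZ hXYZ).symm
    _ ≤ μ.inn S := μ.m_le_inn (μ.meas_union hXY hZ) hS

end FAM

lemma Set.vadd_inter_subset_add {G : Type*} [AddCommGroup G] {s t u : Set G} {g : G}
    (hg : g ∈ s) : g +ᵥ (t ∩ u) ⊆ s + t :=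
  (vadd_set_subset_add hg).trans (add_subset_add_left inter_subset_left)

namespace UnitAddCircle

lemma eq_of_coe_eq_of_abs_sub_lt_one {x y : ℝ} (h : (x : UnitAddCircle) = y)
    (hxy : |x - y| < 1) : x = y := by
  rw [abs_lt] at hxy
  refine (AddCircle.coe_eq_coe_iff_of_mem_Ico (a := min x y) ?_ ?_).mp h <;>
    constructor <;> cases min_choice x y <;> simp_all <;> linarith

lemma coe_image_Icc_eq_univ {u v : ℝ} (h : u + 1 ≤ v) :
    ((↑) : ℝ → UnitAddCircle) '' Icc u v = univ :=
  eq_univ_of_univ_subset <| (AddCircle.coe_image_Icc_eq 1 u).symm.subset.trans <|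
    image_mono (Icc_subset_Icc_right h)

lemma coe_image_Icc_add (u v t : ℝ) :
    ((↑) : ℝ → UnitAddCircle) '' Icc (u + t) (v + t) = (t : UnitAddCircle) +ᵥ (↑) '' Icc u v := by
  rw [← image_add_const_Icc, image_image, ← image_vadd, image_image]
  simp only [vadd_eq_add, AddCircle.coe_add, add_comm]

lemma coe_image_Icc_disjoint {u₁ v₁ u₂ v₂ : ℝ} (h₁ : v₁ < u₂) (h₂ : v₂ < u₁ + 1) :
    Disjoint (((↑) : ℝ → UnitAddCircle) '' Icc u₁ v₁) ((↑) '' Icc u₂ v₂) := by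
  rw [disjoint_left]
  rintro _ ⟨x, hx, rfl⟩ ⟨y, hy, hyx⟩
  have := eq_of_coe_eq_of_abs_sub_lt_one hyx
    (abs_lt.mpr ⟨by linarith [hx.2, hy.1], by linarith [hx.1, hy.2]⟩)
  linarith [hx.2, hy.1]

lemma coe_image_Icc_inter_subset {u₁ v₁ u₂ v₂ : ℝ} (h₁ : u₁ ≤ u₂) (h₂ : v₁ ≤ v₂)
    (h₃ : v₂ < u₁ + 1) :
    ((↑) : ℝ → UnitAddCircle) '' Icc u₁ v₁ ∩ (↑) '' Icc u₂ v₂ ⊆ (↑) '' Icc u₂ v₁ := by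
  rintro _ ⟨⟨x, hx, rfl⟩, ⟨y, hy, hyx⟩⟩
  have := eq_of_coe_eq_of_abs_sub_lt_one hyx
    (abs_lt.mpr ⟨by linarith [hx.2, hy.1], by linarith [hx.1, hy.2]⟩)
  exact ⟨y, ⟨hy.1, by linarith [hx.2]⟩, hyx⟩

end UnitAddCircle

section BohrInterval

variable {G : Type*} [AddCommGroup G] (τ : G →+ UnitAddCircle)

def bohrInterval (u v : ℝ) : Set G := τ ⁻¹' ((fun x : ℝ => (x : UnitAddCircle)) '' Icc u v)

variable {τ}

lemma bohrInterval_mono {u v u' v' : ℝ} (hu : u' ≤ u) (hv : v ≤ v') :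
    bohrInterval τ u v ⊆ bohrInterval τ u' v' :=
  preimage_mono (image_mono (Icc_subset_Icc hu hv))

lemma bohrInterval_union {u v w : ℝ} (huw : u ≤ w) (hwv : w ≤ v) :
    bohrInterval τ u w ∪ bohrInterval τ w v = bohrInterval τ u v := by
  rw [bohrInterval, bohrInterval, ← preimage_union, ← image_union, Icc_union_Icc_eq_Icc huw hwv,
    bohrInterval]

lemma bohrInterval_eq_univ {u v : ℝ} (h : u + 1 ≤ v) : bohrInterval τ u v = univ := by
  rw [bohrInterval, UnitAddCircle.coe_image_Icc_eq_univ h, preimage_univ]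

lemma vadd_bohrInterval {g : G} {t : ℝ} (hg : τ g = t) (u v : ℝ) :
    g +ᵥ bohrInterval τ u v = bohrInterval τ (u + t) (v + t) := by
  ext x
  rw [mem_vadd_set_iff_neg_vadd_mem, bohrInterval, bohrInterval, mem_preimage, mem_preimage,
    UnitAddCircle.coe_image_Icc_add, mem_vadd_set_iff_neg_vadd_mem, vadd_eq_add, vadd_eq_add,
    map_add, map_neg, hg]

lemma disjoint_bohrInterval {u₁ v₁ u₂ v₂ : ℝ} (h₁ : v₁ < u₂) (h₂ : v₂ < u₁ + 1) :
    Disjoint (bohrInterval τ u₁ v₁) (bohrInterval τ u₂ v₂) :=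
  (UnitAddCircle.coe_image_Icc_disjoint h₁ h₂).preimage τ

lemma bohrInterval_inter_subset {u₁ v₁ u₂ v₂ : ℝ} (h₁ : u₁ ≤ u₂) (h₂ : v₁ ≤ v₂)
    (h₃ : v₂ < u₁ + 1) :
    bohrInterval τ u₁ v₁ ∩ bohrInterval τ u₂ v₂ ⊆ bohrInterval τ u₂ v₁ :=
  preimage_mono (UnitAddCircle.coe_image_Icc_inter_subset h₁ h₂ h₃)

lemma exists_coe_eq_of_notMem_bohrInterval {a b : ℝ} {x : G} (hx : x ∉ bohrInterval τ a b) :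
    ∃ r, b < r ∧ r < a + 1 ∧ (r : UnitAddCircle) = τ x := by
  obtain ⟨r, ⟨har, hra⟩, hrx⟩ : ∃ r ∈ Ico a (a + 1), (r : UnitAddCircle) = τ x := by
    rw [← mem_image, AddCircle.coe_image_Ico_eq]; trivial
  exact ⟨r, not_le.mp fun hrb => hx ⟨r, ⟨har, hrb⟩, hrx⟩, hra, hrx⟩

end BohrInterval

lemma exists_shifted_subinterval_in_gap {a b c d r : ℝ} (hbr : b < r) (hra : r < a + 1)
    (hcd : c < d) (hgap : b - a + (d - c) < 1) :
    ∃ p q, c < p ∧ p < q ∧ q < d ∧ b + d < p + r ∧ q + r < a + c + 1 := by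
  have h : max c (b + d - r) < min d (a + c + 1 - r) := by
    simp only [max_lt_iff, lt_min_iff]; constructor <;> constructor <;> linarith
  obtain ⟨p, hp, hpq⟩ := exists_between h
  obtain ⟨q, hpq, hq⟩ := exists_between hpq
  simp only [max_lt_iff, lt_min_iff] at hp hq
  exact ⟨p, q, hp.1, hpq, hq.1, by linarith, by linarith⟩

namespace FAM

variable {G : Type*} [AddCommGroup G] (μ : FAM G) {τ : G →+ UnitAddCircle}

lemma meas_bohrInterval (hτ : ∀ U : Set UnitAddCircle, IsOpen U → μ.Meas (τ ⁻¹' U)) (u v : ℝ) :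
    μ.Meas (bohrInterval τ u v) := by
  have hclosed : IsClosed ((fun x : ℝ => (x : UnitAddCircle)) '' Icc u v) :=
    (isCompact_Icc.image (AddCircle.continuous_mk' 1)).isClosed
  simpa [bohrInterval, preimage_compl] using μ.meas_compl (hτ _ hclosed.isOpen_compl)

variable (hprob : μ.m univ = 1) (hsurj : Function.Surjective τ)
  (hτ : ∀ U : Set UnitAddCircle, IsOpen U → μ.Meas (τ ⁻¹' U))

include hsurj hτ in
lemma m_bohrInterval_le {u v u' v' : ℝ} (h : v - u ≤ v' - u') :
    μ.m (bohrInterval τ u v) ≤ μ.m (bohrInterval τ u' v') := by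
  obtain ⟨g, hg⟩ := hsurj (u - u' : ℝ)
  have hshift := vadd_bohrInterval hg u' (u' + (v - u))
  rw [add_sub_cancel, show u' + (v - u) + (u - u') = v by ring] at hshift
  rw [← hshift, μ.m_vadd g (μ.meas_bohrInterval hτ _ _)]
  exact μ.m_mono (μ.meas_bohrInterval hτ _ _) (μ.meas_bohrInterval hτ _ _)
    (bohrInterval_mono le_rfl (by linarith))

include hsurj hτ in
lemma m_bohrInterval_eq {u v u' v' : ℝ} (h : v - u = v' - u') :
    μ.m (bohrInterval τ u v) = μ.m (bohrInterval τ u' v') :=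
  le_antisymm (μ.m_bohrInterval_le hsurj hτ h.le) (μ.m_bohrInterval_le hsurj hτ h.ge)

include hsurj hτ in
lemma m_bohrInterval_le_natCast_mul {u l : ℝ} (hl : 0 ≤ l) {n : ℕ} (hn : 1 ≤ n) :
    μ.m (bohrInterval τ u (u + n * l)) ≤ n * μ.m (bohrInterval τ u (u + l)) := by
  induction n, hn using Nat.le_induction with
  | base => simp
  | succ n hn ih =>
    have hnl : 0 ≤ n * l := by positivity
    simp only [Nat.cast_succ, add_one_mul]
    rw [← bohrInterval_union (w := u + n * l) (by linarith) (by linarith)]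
    exact (μ.m_union_le (μ.meas_bohrInterval hτ _ _) (μ.meas_bohrInterval hτ _ _)).trans
      (add_le_add ih (μ.m_bohrInterval_le hsurj hτ (by linarith)))

include hprob hsurj hτ in
lemma m_bohrInterval_pos {u v : ℝ} (h : u < v) : 0 < μ.m (bohrInterval τ u v) := by
  obtain ⟨n, hn⟩ := exists_nat_gt (1 / (v - u))
  have hn1 : 1 ≤ n := by
    have : (0 : ℝ) < n := lt_trans (by have := sub_pos.mpr h; positivity) hn
    exact_mod_cast this
  have hcover : u + 1 ≤ u + n * (v - u) := by
    rw [div_lt_iff₀ (sub_pos.mpr h)] at hn; linarith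
  have hone := μ.m_bohrInterval_le_natCast_mul hsurj hτ (u := u) (sub_pos.mpr h).le hn1
  rw [bohrInterval_eq_univ hcover, hprob, add_sub_cancel] at hone
  refine pos_iff_ne_zero.mpr fun h0 => ?_
  rw [h0, mul_zero] at hone
  exact one_ne_zero (nonpos_iff_eq_zero.mp hone)

include hprob hsurj hτ in
/-- Two disjoint translates of a third of `[u', v']` fit inside it. -/
lemma m_bohrInterval_lt {u v u' v' : ℝ} (h : 3 * (v - u) ≤ v' - u') (h' : u' < v')
    (h₁ : v' < u' + 1) :
    μ.m (bohrInterval τ u v) < μ.m (bohrInterval τ u' v') := by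
  set l := (v' - u') / 3 with hl
  have hmeas := μ.meas_bohrInterval hτ
  set x := μ.m (bohrInterval τ u' (u' + l))
  have hx : 0 < x := μ.m_bohrInterval_pos hprob hsurj hτ (by linarith)
  have hxtop : x ≠ ⊤ := μ.m_ne_top (by simp [hprob]) (hmeas _ _)
  have hsecond : μ.m (bohrInterval τ (v' - l) v') = x :=
    μ.m_bohrInterval_eq hsurj hτ (by ring)
  have htwo : x + x ≤ μ.m (bohrInterval τ u' v') := by
    nth_rewrite 2 [← hsecond]
    rw [← μ.m_union (hmeas _ _) (hmeas _ _) (disjoint_bohrInterval (by linarith) (by linarith))]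
    exact μ.m_mono (μ.meas_union (hmeas _ _) (hmeas _ _)) (hmeas _ _)
      (union_subset (bohrInterval_mono le_rfl (by linarith))
        (bohrInterval_mono (by linarith) le_rfl))
  calc μ.m (bohrInterval τ u v) ≤ x := μ.m_bohrInterval_le hsurj hτ (by linarith)
    _ < x + x := ENNReal.lt_add_right hxtop hx.ne'
    _ ≤ _ := htwo

include hprob hsurj hτ in
lemma add_lt_one_of_m_bohrInterval_add_lt_one {a b c d : ℝ} (hab : a ≤ b) (hcd : c ≤ d)
    (h : μ.m (bohrInterval τ a b) + μ.m (bohrInterval τ c d) < 1) : b - a + (d - c) < 1 := by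
  by_contra! hge
  have hcover : bohrInterval τ a b ∪ bohrInterval τ b (b + (d - c)) = univ := by
    rw [bohrInterval_union hab (by linarith), bohrInterval_eq_univ (by linarith)]
  have hle := μ.m_union_le (μ.meas_bohrInterval hτ a b) (μ.meas_bohrInterval hτ b (b + (d - c)))
  rw [hcover, hprob, μ.m_bohrInterval_eq hsurj hτ (show b + (d - c) - b = d - c by ring)] at hle
  exact h.not_ge hle

include hprob hsurj hτ in
lemma exists_coe_eq_of_m_diff_eq_zero {S B : Set G} (hS : μ.Meas S) (hB : μ.Meas B) {u v : ℝ}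
    (huv : u < v) (hsub : bohrInterval τ u v ⊆ S) (hSB : μ.m (S \ B) = 0) :
    ∃ y ∈ B, ∃ s ∈ Icc u v, (s : UnitAddCircle) = τ y := by
  have hK := μ.meas_bohrInterval hτ u v
  have hpos := μ.m_bohrInterval_pos hprob hsurj hτ huv
  rw [← μ.m_inter_eq_of_subset_of_m_diff_eq_zero hB hK hS hsub hSB] at hpos
  obtain ⟨y, hyB, s, hs, hsy⟩ : (B ∩ bohrInterval τ u v).Nonempty :=
    nonempty_iff_ne_empty.mpr fun h0 => hpos.ne' (h0 ▸ μ.m_empty)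
  exact ⟨y, hyB, s, hs, hsy⟩

include hprob hsurj hτ in
theorem subset_bohrInterval_of_inn_add_le {a b c d : ℝ} (hab : a < b) (hcd : c < d)
    (hgap : b - a + (d - c) < 1) {A B : Set G} (hA : μ.Meas A) (hB : μ.Meas B)
    (hsum : μ.inn (A + B) ≤ μ.m A + μ.m B)
    (hAI : μ.m (A \ bohrInterval τ a b ∪ bohrInterval τ a b \ A) = 0)
    (hBJ : μ.m (B \ bohrInterval τ c d ∪ bohrInterval τ c d \ B) = 0) :
    A ⊆ bohrInterval τ a b := by
  have hK := μ.meas_bohrInterval hτ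
  obtain ⟨hAI, hIA⟩ := μ.m_diff_eq_zero_of_m_union_diff_eq_zero hA (hK a b) hAI
  obtain ⟨hBJ, hJB⟩ := μ.m_diff_eq_zero_of_m_union_diff_eq_zero hB (hK c d) hBJ
  intro x hxA
  by_contra hxI
  obtain ⟨r, hbr, hra, hrx⟩ := exists_coe_eq_of_notMem_bohrInterval hxI
  obtain ⟨p, q, hcp, hpq, hqd, hrp, hrq⟩ := exists_shifted_subinterval_in_gap hbr hra hcd hgap
  set δ := min (b - a) ((q - p) / 3)
  have hδpos : 0 < δ := lt_min (by linarith) (by linarith)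
  have hδI : δ ≤ b - a := min_le_left _ _
  have hδpq : δ ≤ (q - p) / 3 := min_le_right _ _
  obtain ⟨y, hyB, s, ⟨hcs, hsc⟩, hsy⟩ := μ.exists_coe_eq_of_m_diff_eq_zero hprob hsurj hτ
    (hK c d) hB (v := c + δ / 2) (by linarith) (bohrInterval_mono le_rfl (by linarith)) hJB
  obtain ⟨e, heA, t, ⟨hbt, htb⟩, hte⟩ := μ.exists_coe_eq_of_m_diff_eq_zero hprob hsurj hτ
    (hK a b) hA (u := b - δ / 2) (by linarith) (bohrInterval_mono (by linarith) le_rfl) hIA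
  have hX : y +ᵥ (A ∩ bohrInterval τ a b) ⊆ bohrInterval τ (a + s) (b + s) :=
    vadd_bohrInterval hsy.symm a b ▸ vadd_set_mono inter_subset_right
  have hY : e +ᵥ (B ∩ bohrInterval τ c d) ⊆ bohrInterval τ (c + t) (d + t) :=
    vadd_bohrInterval hte.symm c d ▸ vadd_set_mono inter_subset_right
  have hZ : x +ᵥ (B ∩ bohrInterval τ p q) ⊆ bohrInterval τ (p + r) (q + r) :=
    vadd_bohrInterval hrx.symm p q ▸ vadd_set_mono inter_subset_right
  refine (μ.m_add_m_lt_inn (S := A + B) (by simp [hprob])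
    (μ.meas_vadd y (μ.meas_inter_s15 hA (hK a b))) (μ.meas_vadd e (μ.meas_inter_s15 hB (hK c d)))
    (μ.meas_vadd x (μ.meas_inter_s15 hB (hK p q))) (hK (c + t) (b + s)) ?overlap ?short ?disjoint
    ?subset).not_ge ?_
  case overlap =>
    exact (inter_subset_inter hX hY).trans
      (bohrInterval_inter_subset (by linarith) (by linarith) (by linarith))
  case short =>
    rw [μ.m_vadd _ (μ.meas_inter_s15 hB (hK p q)), μ.m_inter_eq_of_subset_of_m_diff_eq_zero hB
      (hK p q) (hK c d) (bohrInterval_mono hcp.le hqd.le) hJB]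
    exact μ.m_bohrInterval_lt hprob hsurj hτ (by linarith) hpq (by linarith)
  case disjoint =>
    refine (disjoint_bohrInterval (u₁ := a + c) (v₁ := b + d) hrp (by linarith)).mono
      (union_subset (hX.trans ?_) (hY.trans ?_)) hZ <;>
      exact bohrInterval_mono (by linarith) (by linarith)
  case subset =>
    exact union_subset (union_subset (add_comm B A ▸ vadd_inter_subset_add hyB)
      (vadd_inter_subset_add heA)) (vadd_inter_subset_add hxA)
  rw [μ.m_vadd _ (μ.meas_inter_s15 hA (hK a b)), μ.m_vadd _ (μ.meas_inter_s15 hB (hK c d)),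
    inter_comm A, inter_comm B, μ.m_inter_eq_of_subset_of_m_diff_eq_zero (hK a b) hA hA le_rfl hAI,
    μ.m_inter_eq_of_subset_of_m_diff_eq_zero (hK c d) hB hB le_rfl hBJ]
  exact hsum

end FAM
theorem essential_move_interval_general {G : Type*} [AddCommGroup G] (μ : FAM G)
    (hprob : μ.m Set.univ = 1)
    (τ : G →+ UnitAddCircle) (hsurj : Function.Surjective τ)
    (hτ : ∀ U : Set UnitAddCircle, IsOpen U → μ.Meas (τ ⁻¹' U))
    (a b c d : ℝ) (hab : 0 < b - a)
    (hcd : 0 < d - c)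
    (I' J' : Set G)
    (hI' : I' = τ ⁻¹' ((fun x : ℝ => (x : UnitAddCircle)) '' Set.Icc a b))
    (hJ' : J' = τ ⁻¹' ((fun x : ℝ => (x : UnitAddCircle)) '' Set.Icc c d))
    (A B : Set G) (hA : μ.Meas A) (hB : μ.Meas B)
    (hsum : μ.inn (A + B) ≤ μ.m A + μ.m B)
    (hIJ : μ.m I' + μ.m J' < 1)
    (hAI : μ.m ((A \ I') ∪ (I' \ A)) = 0)
    (hBJ : μ.m ((B \ J') ∪ (J' \ B)) = 0) :
    A ⊆ I' ∧ B ⊆ J' := by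
  change I' = bohrInterval τ a b at hI'
  change J' = bohrInterval τ c d at hJ'
  subst hI' hJ'
  have hgap := μ.add_lt_one_of_m_bohrInterval_add_lt_one hprob hsurj hτ (by linarith)
    (by linarith) hIJ
  refine ⟨μ.subset_bohrInterval_of_inn_add_le hprob hsurj hτ (by linarith) (by linarith) hgap
    hA hB hsum hAI hBJ, μ.subset_bohrInterval_of_inn_add_le hprob hsurj hτ (by linarith)
    (by linarith) (by linarith) hB hA ?_ hBJ hAI⟩
  rwa [add_comm B, add_comm (μ.m B)]

/-- if `ν_*(A+B) ≤ ν(A) + ν(B)` and `Ĩ, J̃` are parallel Bohr intervals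
with `ν(Ĩ) + ν(J̃) < 1`, `A ∼_ν Ĩ` and `B ∼_ν J̃`, then `A ⊆ Ĩ` and `B ⊆ J̃`. -/
theorem essential_move_interval {G : Type*} [AddCommGroup G] (μ : FAM G)
    (hprob : μ.m Set.univ = 1)
    (τ : G →+ UnitAddCircle) (hsurj : Function.Surjective τ)
    (hτ : ∀ U : Set UnitAddCircle, IsOpen U → μ.Meas (τ ⁻¹' U))
    (a b c d : ℝ) (hab : 0 < b - a) (hab1 : b - a ≤ 1)
    (hcd : 0 < d - c) (hcd1 : d - c ≤ 1)
    (I' J' : Set G)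
    (hI' : I' = τ ⁻¹' ((fun x : ℝ => (x : UnitAddCircle)) '' Set.Icc a b))
    (hJ' : J' = τ ⁻¹' ((fun x : ℝ => (x : UnitAddCircle)) '' Set.Icc c d))
    (A B : Set G) (hA : μ.Meas A) (hB : μ.Meas B)
    (hsum : μ.inn (A + B) ≤ μ.m A + μ.m B)
    (hIJ : μ.m I' + μ.m J' < 1)
    (hAI : μ.m ((A \ I') ∪ (I' \ A)) = 0)
    (hBJ : μ.m ((B \ J') ∪ (J' \ B)) = 0) :
    A ⊆ I' ∧ B ⊆ J' :=
  essential_move_interval_general μ hprob τ hsurj hτ a b c d hab hcd I' J' hI' hJ' A B hA hB hsum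
    hIJ hAI hBJ
end

section
/- Let H be a Hilbert space L²(μ) for a probability measure μ, and let L²(μ)_c be the closed subspace spanned by a uniformly closed, conjugation-closed algebra 𝓕 of bounded functions containing the constants. Let f ↦ f^(c) denote orthogonal projection onto L²(μ)_c. Then: (i) if f ≥ 0 μ-a.e. then f^(c) ≥ 0 μ-a.e.; (ii) if 0 ≤ f ≤ 1 μ-a.e. then 0 ≤ f^(c) ≤ 1 μ-a.e.; (iii) ∫ f^(c) dμ = ∫ f dμ; (iv) for any measurable set A, μ(A \ {x : 1_A^(c)(x) > 0}) = 0. -/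
/-!
The algebra `F` is closed under composition with continuous functions (Weierstrass approximation
on the bounded range of an element), so for every Lipschitz `φ` the function `φ ∘ f^(c)` lies in
the `L²`-closure of `F`, to which `f - f^(c)` is orthogonal. For `φ = min · 0` this gives
`∫ min(f^(c), 0)² = ∫ f · min(f^(c), 0) ≤ 0`, hence (i); (ii) is (i) applied to `1 - f`, and (iii)
is orthogonality to the constant `1`. For (iv), `φ = max (δ - ·) 0` gives
`δ · μ(A \ {f^(c) > 0}) ≤ ∫ f · φ(f^(c)) = ∫ f^(c) · φ(f^(c)) ≤ δ²`; let `δ → 0`.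
-/

open MeasureTheory
open scoped NNReal

section

variable {X : Type*}

structure IsUniformlyClosedAlgebra (F : Set (X → ℝ)) : Prop where
  bounded : ∀ f ∈ F, ∃ C : ℝ, ∀ x, |f x| ≤ C
  const_mem : ∀ c : ℝ, (fun _ => c) ∈ F
  add_mem : ∀ f ∈ F, ∀ g ∈ F, f + g ∈ F
  mul_mem : ∀ f ∈ F, ∀ g ∈ F, f * g ∈ F
  mem_of_uniform_approx : ∀ f : X → ℝ, (∀ ε > 0, ∃ g ∈ F, ∀ x, |f x - g x| ≤ ε) → f ∈ F

namespace IsUniformlyClosedAlgebra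

variable {F : Set (X → ℝ)} {h : X → ℝ}

theorem polynomial_eval_mem (hF : IsUniformlyClosedAlgebra F) (hh : h ∈ F) (p : Polynomial ℝ) :
    (fun x => p.eval (h x)) ∈ F := by
  induction p using Polynomial.induction_on with
  | C a => simpa using hF.const_mem a
  | add p q hp hq =>
    simp only [Polynomial.eval_add]
    exact hF.add_mem _ hp _ hq
  | monomial n a ih =>
    simp only [Polynomial.eval_mul, Polynomial.eval_C, Polynomial.eval_pow, Polynomial.eval_X,
      pow_succ, ← mul_assoc] at ih ⊢
    exact hF.mul_mem _ ih _ hh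

theorem comp_mem (hF : IsUniformlyClosedAlgebra F) (hh : h ∈ F) {φ : ℝ → ℝ} (hφ : Continuous φ) :
    (fun x => φ (h x)) ∈ F := by
  obtain ⟨C, hC⟩ := hF.bounded h hh
  refine hF.mem_of_uniform_approx _ fun ε hε => ?_
  obtain ⟨p, hp⟩ := exists_polynomial_near_of_continuousOn (-C) C φ hφ.continuousOn ε hε
  exact ⟨_, hF.polynomial_eval_mem hh p,
    fun x => by simpa only [abs_sub_comm] using (hp (h x) (abs_le.1 (hC x))).le⟩

end IsUniformlyClosedAlgebra

variable [MeasurableSpace X] {μ : Measure X}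

theorem MeasureTheory.MemLp.integrable_fun_mul {p q : ENNReal} [p.HolderTriple q 1] {u v : X → ℝ}
    (hu : MemLp u p μ) (hv : MemLp v q μ) : Integrable (fun x => u x * v x) μ :=
  hu.integrable_mul hv

theorem LipschitzWith.memLp_comp [IsFiniteMeasure μ] {p : ENNReal} {φ : ℝ → ℝ} {K : ℝ≥0}
    (hφ : LipschitzWith K φ) {h : X → ℝ} (hh : MemLp h p μ) : MemLp (fun x => φ (h x)) p μ := by
  have hφ0 : LipschitzWith (K + 0) fun y => φ y - φ 0 := hφ.sub (LipschitzWith.const _)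
  convert (hφ0.comp_memLp (by simp) hh).add (memLp_const (φ 0)) using 1
  ext x
  simp

theorem sq_integral_mul_le {u v : X → ℝ} (hu : MemLp u 2 μ) (hv : MemLp v 2 μ) :
    (∫ x, u x * v x ∂μ) ^ 2 ≤ (∫ x, u x ^ 2 ∂μ) * ∫ x, v x ^ 2 ∂μ := by
  have hquad : ∀ t : ℝ, 0 ≤ (∫ x, u x ^ 2 ∂μ) * (t * t) + 2 * (∫ x, u x * v x ∂μ) * t
      + ∫ x, v x ^ 2 ∂μ := by
    intro t
    have hexp : ∀ x, (t * u x + v x) ^ 2 = t * t * u x ^ 2 + 2 * t * (u x * v x) + v x ^ 2 :=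
      fun x => by ring
    have h1 : Integrable (fun x => t * t * u x ^ 2) μ := hu.integrable_sq.const_mul _
    have h2 : Integrable (fun x => 2 * t * (u x * v x)) μ := (hu.integrable_fun_mul hv).const_mul _
    calc 0 ≤ ∫ x, (t * u x + v x) ^ 2 ∂μ := integral_nonneg fun x => sq_nonneg _
      _ = _ := by
        simp only [hexp]
        rw [integral_add (h1.fun_add h2) hv.integrable_sq, integral_add h1 h2, integral_const_mul,
          integral_const_mul]
        ring
  have := discrim_le_zero hquad
  rw [discrim] at this
  nlinarith

/-- Meaningful only for `h ∈ L²`: a non-integrable integrand has integral `0`. -/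
def l2Closure (μ : Measure X) (F : Set (X → ℝ)) : Set (X → ℝ) :=
  {h | ∀ ε > 0, ∃ g ∈ F, ∫ x, (h x - g x) ^ 2 ∂μ < ε}

variable {F : Set (X → ℝ)}

theorem integral_mul_eq_zero_of_mem_l2Closure (hF : ∀ g ∈ F, MemLp g 2 μ) {u h : X → ℝ}
    (hu : MemLp u 2 μ) (hh : MemLp h 2 μ) (horth : ∀ g ∈ F, ∫ x, u x * g x ∂μ = 0)
    (hcl : h ∈ l2Closure μ F) : ∫ x, u x * h x ∂μ = 0 := by
  suffices (∫ x, u x * h x ∂μ) ^ 2 ≤ 0 by nlinarith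
  refine le_of_forall_pos_lt_add fun ε hε => ?_
  set A := ∫ x, u x ^ 2 ∂μ
  have hA : 0 ≤ A := integral_nonneg fun x => sq_nonneg _
  obtain ⟨g, hgF, hg⟩ := hcl (ε / (A + 1)) (by positivity)
  have hsplit : ∫ x, u x * h x ∂μ = ∫ x, u x * (h x - g x) ∂μ := by
    simp only [mul_sub]
    rw [integral_sub (hu.integrable_fun_mul hh) (hu.integrable_fun_mul (hF g hgF)), horth g hgF,
      sub_zero]
  calc (∫ x, u x * h x ∂μ) ^ 2 ≤ A * ∫ x, (h x - g x) ^ 2 ∂μ :=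
        hsplit ▸ sq_integral_mul_le hu (hh.sub (hF g hgF))
    _ ≤ A * (ε / (A + 1)) := by gcongr
    _ < 0 + ε := by
      rw [zero_add, mul_div_assoc', div_lt_iff₀ (by positivity)]
      nlinarith

theorem comp_mem_l2Closure (hF : ∀ g ∈ F, MemLp g 2 μ) {φ : ℝ → ℝ} {K : ℝ≥0}
    (hφ : LipschitzWith K φ) (hφF : ∀ g ∈ F, (fun x => φ (g x)) ∈ F) {h : X → ℝ}
    (hh : MemLp h 2 μ) (hcl : h ∈ l2Closure μ F) : (fun x => φ (h x)) ∈ l2Closure μ F := by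
  intro ε hε
  obtain ⟨g, hgF, hg⟩ := hcl (ε / (K ^ 2 + 1)) (by positivity)
  refine ⟨_, hφF g hgF, ?_⟩
  have hpt : ∀ x, (φ (h x) - φ (g x)) ^ 2 ≤ K ^ 2 * (h x - g x) ^ 2 := fun x => by
    have := hφ.dist_le_mul (h x) (g x)
    rw [Real.dist_eq, Real.dist_eq] at this
    rw [← sq_abs, ← sq_abs (h x - g x), ← mul_pow]
    gcongr
  calc ∫ x, (φ (h x) - φ (g x)) ^ 2 ∂μ ≤ ∫ x, K ^ 2 * (h x - g x) ^ 2 ∂μ :=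
        integral_mono_of_nonneg (ae_of_all _ fun x => sq_nonneg _)
          ((hh.sub (hF g hgF)).integrable_sq.const_mul _) (ae_of_all _ hpt)
    _ = K ^ 2 * ∫ x, (h x - g x) ^ 2 ∂μ := integral_const_mul _ _
    _ ≤ K ^ 2 * (ε / (K ^ 2 + 1)) := by gcongr
    _ < ε := by
      rw [mul_div_assoc', div_lt_iff₀ (by positivity)]
      nlinarith

theorem ae_nonneg_of_integral_sub_mul_min_eq_zero {f g : X → ℝ} (hf : MemLp f 2 μ)
    (hg : MemLp g 2 μ) (hf0 : ∀ᵐ x ∂μ, 0 ≤ f x)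
    (horth : ∫ x, (f x - g x) * min (g x) 0 ∂μ = 0) : ∀ᵐ x ∂μ, 0 ≤ g x := by
  have hN : MemLp (fun x => min (g x) 0) 2 μ :=
    (LipschitzWith.id.min_const 0).comp_memLp (by simp) hg
  have hsplit : ∀ x, (f x - g x) * min (g x) 0 = f x * min (g x) 0 - min (g x) 0 ^ 2 := by
    intro x
    rcases le_total (g x) 0 with hx | hx
    · rw [min_eq_left hx]; ring
    · rw [min_eq_right hx]; ring
  simp only [hsplit] at horth
  rw [integral_sub (hf.integrable_fun_mul hN) hN.integrable_sq, sub_eq_zero] at horth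
  have hle : ∫ x, f x * min (g x) 0 ∂μ ≤ 0 :=
    integral_nonpos_of_ae
      (hf0.mono fun x hx => mul_nonpos_of_nonneg_of_nonpos hx (min_le_right _ _))
  have hzero : (fun x => min (g x) 0 ^ 2) =ᵐ[μ] 0 :=
    (integral_eq_zero_iff_of_nonneg_ae (ae_of_all _ fun x => sq_nonneg _) hN.integrable_sq).1
      (le_antisymm (horth ▸ hle) (integral_nonneg fun x => sq_nonneg _))
  filter_upwards [hzero] with x hx
  simpa using hx

theorem measure_diff_pos_eq_zero [IsFiniteMeasure μ] {A : Set X} {f g : X → ℝ}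
    (hfA : f = A.indicator 1) (hf : MemLp f 2 μ) (hg : MemLp g 2 μ)
    (horth : ∀ δ > 0, ∫ x, (f x - g x) * max (δ - g x) 0 ∂μ = 0) :
    μ (A \ {x | 0 < g x}) = 0 := by
  set S := A \ {x | 0 < g x}
  have hf0 : ∀ x, 0 ≤ f x := fun x => hfA ▸ Set.indicator_nonneg (fun _ _ => zero_le_one) x
  have hbound : ∀ δ > 0, μ.real S ≤ δ * μ.real Set.univ := by
    intro δ hδ
    have hφ : MemLp (fun x => max (δ - g x) 0) 2 μ :=
      (((LipschitzWith.const δ).sub LipschitzWith.id).max_const 0).memLp_comp hg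
    have hS : S ⊆ {x | δ ≤ f x * max (δ - g x) 0} := by
      rintro x ⟨hxA, hxg⟩
      have hx0 : g x ≤ 0 := not_lt.1 hxg
      show δ ≤ f x * max (δ - g x) 0
      rw [hfA, Set.indicator_of_mem hxA, Pi.one_apply, one_mul]
      exact le_max_of_le_left (by linarith)
    have hmarkov := mul_meas_ge_le_integral_of_nonneg
      (ae_of_all _ fun x => mul_nonneg (hf0 x) (le_max_right _ _)) (hf.integrable_fun_mul hφ) δ
    have heq : ∫ x, f x * max (δ - g x) 0 ∂μ = ∫ x, g x * max (δ - g x) 0 ∂μ := by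
      rw [← sub_eq_zero, ← integral_sub (hf.integrable_fun_mul hφ) (hg.integrable_fun_mul hφ)]
      simpa only [sub_mul] using horth δ hδ
    have hpt : ∀ x, g x * max (δ - g x) 0 ≤ δ ^ 2 := fun x => by
      rcases le_total (g x) δ with hx | hx
      · rw [max_eq_left (sub_nonneg.2 hx)]
        nlinarith [sq_nonneg (g x - δ / 2)]
      · rw [max_eq_right (sub_nonpos.2 hx), mul_zero]
        positivity
    have hle : ∫ x, g x * max (δ - g x) 0 ∂μ ≤ δ ^ 2 * μ.real Set.univ :=
      calc _ ≤ ∫ _, δ ^ 2 ∂μ := integral_mono (hg.integrable_fun_mul hφ) (integrable_const _) hpt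
        _ = _ := by rw [integral_const, smul_eq_mul, mul_comm]
    refine le_of_mul_le_mul_left ?_ hδ
    calc δ * μ.real S ≤ δ * μ.real {x | δ ≤ f x * max (δ - g x) 0} :=
          mul_le_mul_of_nonneg_left (measureReal_mono hS) hδ.le
      _ ≤ δ ^ 2 * μ.real Set.univ := (hmarkov.trans_eq heq).trans hle
      _ = δ * (δ * μ.real Set.univ) := by ring
  have hlim : Filter.Tendsto (fun δ : ℝ => δ * μ.real Set.univ) (nhdsWithin 0 (Set.Ioi 0))
      (nhds 0) := by
    simpa using ((continuous_mul_const (μ.real Set.univ)).tendsto 0).mono_left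
      (nhdsWithin_le_nhds (s := Set.Ioi 0))
  have hS0 : μ.real S ≤ 0 := ge_of_tendsto hlim (eventually_nhdsWithin_of_forall hbound)
  exact (measureReal_eq_zero_iff).1 (le_antisymm hS0 measureReal_nonneg)

end

theorem projection_onto_algebra_general
    {X : Type*} [MeasurableSpace X] (μ : Measure X) [IsProbabilityMeasure μ]
    (F : Set (X → ℝ))
    (hFmeas : ∀ f ∈ F, Measurable f)
    (hFbdd : ∀ f ∈ F, ∃ C : ℝ, ∀ x, |f x| ≤ C)
    (hFconst : ∀ c : ℝ, (fun _ => c) ∈ F)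
    (hFadd : ∀ f ∈ F, ∀ g ∈ F, f + g ∈ F)
    (hFmul : ∀ f ∈ F, ∀ g ∈ F, f * g ∈ F)
    (hFclosed : ∀ f : X → ℝ, (∀ ε > 0, ∃ g ∈ F, ∀ x, |f x - g x| ≤ ε) → f ∈ F)
    (f fc : X → ℝ) (hf : MemLp f 2 μ) (hfc : MemLp fc 2 μ)
    (hfc_mem : ∀ ε > 0, ∃ g ∈ F, ∫ x, (fc x - g x) ^ 2 ∂μ < ε)
    (hproj : ∀ g ∈ F, ∫ x, (f x - fc x) * g x ∂μ = 0) :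
    ((∀ᵐ x ∂μ, 0 ≤ f x) → (∀ᵐ x ∂μ, 0 ≤ fc x)) ∧
    ((∀ᵐ x ∂μ, f x ∈ Set.Icc (0 : ℝ) 1) → (∀ᵐ x ∂μ, fc x ∈ Set.Icc (0 : ℝ) 1)) ∧
    (∫ x, fc x ∂μ = ∫ x, f x ∂μ) ∧
    (∀ A : Set X, MeasurableSet A → f = A.indicator 1 →
      μ (A \ {x | 0 < fc x}) = 0) := by
  have hF : IsUniformlyClosedAlgebra F := ⟨hFbdd, hFconst, hFadd, hFmul, hFclosed⟩
  have hF2 : ∀ g ∈ F, MemLp g 2 μ := fun g hg =>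
    let ⟨C, hC⟩ := hFbdd g hg
    MemLp.of_bound (hFmeas g hg).aestronglyMeasurable C (ae_of_all _ hC)
  have orthogonal_comp : ∀ {φ : ℝ → ℝ} {K : ℝ≥0}, LipschitzWith K φ →
      ∫ x, (f x - fc x) * φ (fc x) ∂μ = 0 := fun hφ =>
    integral_mul_eq_zero_of_mem_l2Closure hF2 (hf.sub hfc) (hφ.memLp_comp hfc) hproj
      (comp_mem_l2Closure hF2 hφ (fun _ hg => hF.comp_mem hg hφ.continuous) hfc hfc_mem)
  have nonneg : (∀ᵐ x ∂μ, 0 ≤ f x) → ∀ᵐ x ∂μ, 0 ≤ fc x := fun hf0 =>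
    ae_nonneg_of_integral_sub_mul_min_eq_zero hf hfc hf0
      (orthogonal_comp (LipschitzWith.id.min_const 0))
  refine ⟨nonneg, fun hf01 => ?_, ?_, fun A _ hfA => ?_⟩
  · have hle : ∀ᵐ x ∂μ, 0 ≤ 1 - fc x := by
      refine ae_nonneg_of_integral_sub_mul_min_eq_zero (f := fun x => 1 - f x)
        ((memLp_const 1).sub hf) ((memLp_const 1).sub hfc)
        (hf01.mono fun x hx => sub_nonneg.2 hx.2) ?_
      have := orthogonal_comp (((LipschitzWith.const 1).sub LipschitzWith.id).min_const 0)
      simpa only [sub_sub_sub_cancel_left, ← neg_sub (f _) (fc _), neg_mul, integral_neg,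
        neg_eq_zero, id] using this
    filter_upwards [nonneg (hf01.mono fun x hx => hx.1), hle] with x h0 h1
    exact ⟨h0, sub_nonneg.1 h1⟩
  · have h1 := hproj _ (hFconst 1)
    simp only [mul_one] at h1
    rw [integral_sub (hf.integrable one_le_two) (hfc.integrable one_le_two), sub_eq_zero] at h1
    exact h1.symm
  · exact measure_diff_pos_eq_zero hfA hf hfc fun δ _ =>
      orthogonal_comp (((LipschitzWith.const δ).sub LipschitzWith.id).max_const 0)

/-- properties of the orthogonal projection `f ↦ f^(c)` of `L²(μ)` onto the
`L²`-closure of a uniformly closed algebra `F` of bounded functions containing the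
constants.  `fc` is characterized as the projection of `f`: `fc` lies in the `L²`-closure
of `F` and `f − fc` is orthogonal to `F`. -/
theorem projection_onto_algebra
    {X : Type*} [MeasurableSpace X] (μ : Measure X) [IsProbabilityMeasure μ]
    (F : Set (X → ℝ))
    (hFmeas : ∀ f ∈ F, Measurable f)
    (hFbdd : ∀ f ∈ F, ∃ C : ℝ, ∀ x, |f x| ≤ C)
    (hFconst : ∀ c : ℝ, (fun _ => c) ∈ F)
    (hFadd : ∀ f ∈ F, ∀ g ∈ F, f + g ∈ F)
    (hFmul : ∀ f ∈ F, ∀ g ∈ F, f * g ∈ F)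
    (hFsmul : ∀ (c : ℝ), ∀ f ∈ F, c • f ∈ F)
    (hFclosed : ∀ f : X → ℝ, (∀ ε > 0, ∃ g ∈ F, ∀ x, |f x - g x| ≤ ε) → f ∈ F)
    (f fc : X → ℝ) (hf : MemLp f 2 μ) (hfc : MemLp fc 2 μ)
    (hfc_mem : ∀ ε > 0, ∃ g ∈ F, ∫ x, (fc x - g x) ^ 2 ∂μ < ε)
    (hproj : ∀ g ∈ F, ∫ x, (f x - fc x) * g x ∂μ = 0) :
    ((∀ᵐ x ∂μ, 0 ≤ f x) → (∀ᵐ x ∂μ, 0 ≤ fc x)) ∧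
    ((∀ᵐ x ∂μ, f x ∈ Set.Icc (0 : ℝ) 1) → (∀ᵐ x ∂μ, fc x ∈ Set.Icc (0 : ℝ) 1)) ∧
    (∫ x, fc x ∂μ = ∫ x, f x ∂μ) ∧
    (∀ A : Set X, MeasurableSet A → f = A.indicator 1 →
      μ (A \ {x | 0 < fc x}) = 0) :=
  projection_onto_algebra_general μ F hFmeas hFbdd hFconst hFadd hFmul hFclosed f fc hf hfc hfc_mem
    hproj
end

section
/- Let (G_n) be a sequence of compact abelian groups, 𝒰 a nonprincipal ultrafilter on ℕ, and for each n let χ_n : G_n → S¹ be a continuous character. Define χ : ∏_{n→𝒰} G_n → S¹ by χ(𝐱) = lim_{n→𝒰} χ_n(x_n). Then χ is the trivial character (identically 1) if and only if χ_n is trivial for 𝒰-many n. -/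
/-!
If `χₙ a ≠ 1`, write `χₙ a = exp(iθ)` with `0 < |θ| ≤ π`; a suitable multiple `k • a` has
`k|θ| ∈ [π/2, 3π/2]`, so `Re χₙ (k • a) ≤ 0`. Hence if `χₙ` is nontrivial for `𝒰`-many `n`, these
points form an element of the ultraproduct at which `χ` has real part `≤ 0`, so `χ ≠ 1`.
Conversely, if `χₙ = 1` for `𝒰`-many `n`, every sequence `χₙ (xₙ)` is eventually `1`.
-/

open Filter

lemma exists_nat_mul_mem_Ico {a t : ℝ} (ha : 0 ≤ a) (ht : 0 < t) :
    ∃ k : ℕ, a ≤ k * t ∧ k * t < a + t := by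
  refine ⟨⌈a / t⌉₊, ?_, ?_⟩
  · exact (div_le_iff₀ ht).1 (Nat.le_ceil _)
  · have := Nat.ceil_lt_add_one (div_nonneg ha ht.le)
    calc (⌈a / t⌉₊ : ℝ) * t < (a / t + 1) * t := by gcongr
      _ = a + t := by field_simp

lemma Circle.re_exp (θ : ℝ) : (Circle.exp θ : ℂ).re = Real.cos θ := by
  simp [Circle.coe_exp, Complex.exp_ofReal_mul_I_re]

lemma Circle.exists_pow_re_nonpos {z : Circle} (hz : z ≠ 1) :
    ∃ k : ℕ, ((z ^ k : Circle) : ℂ).re ≤ 0 := by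
  set θ := Complex.arg z
  have hθ : 0 < |θ| := abs_pos.2 (Circle.arg_eq_zero.not.2 hz)
  have hθπ : |θ| ≤ Real.pi := abs_le.2 ⟨(Complex.neg_pi_lt_arg _).le, Complex.arg_le_pi _⟩
  obtain ⟨k, hk₁, hk₂⟩ := exists_nat_mul_mem_Ico (by positivity : 0 ≤ Real.pi / 2) hθ
  refine ⟨k, ?_⟩
  rw [← Circle.exp_arg z, ← Circle.exp_nsmul, Circle.re_exp, nsmul_eq_mul, ← Real.cos_abs,
    abs_mul, Nat.abs_cast]
  exact Real.cos_nonpos_of_pi_div_two_le_of_le hk₁ (by linarith)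

lemma AddChar.exists_re_nonpos {A : Type*} [AddMonoid A] {ψ : AddChar A Circle} (hψ : ψ ≠ 1) :
    ∃ a, (ψ a : ℂ).re ≤ 0 := by
  obtain ⟨a, ha⟩ := DFunLike.ne_iff.1 hψ
  obtain ⟨k, hk⟩ := Circle.exists_pow_re_nonpos ha
  exact ⟨k • a, by rwa [AddChar.map_nsmul_eq_pow]⟩

def AddChar.ofMapAddEqMul {A M : Type*} [AddMonoid A] [Group M] (f : A → M)
    (hf : ∀ a b, f (a + b) = f a * f b) : AddChar A M where
  toFun := f
  map_zero_eq_one' := left_eq_mul.1 (by rw [← hf 0 0, add_zero])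
  map_add_eq_mul' := hf

theorem ultralimit_character_trivial_iff_general
    (𝒰 : Ultrafilter ℕ)
    (G : ℕ → Type*) [∀ n, AddCommGroup (G n)]
    (χ : ∀ n, G n → Circle)
    (hχhom : ∀ n, ∀ a b : G n, χ n (a + b) = χ n a * χ n b)
    (χlim : Filter.Product (𝒰 : Filter ℕ) G → Circle)
    (hχlim : ∀ x : ∀ n, G n,
      Filter.Tendsto (fun n => χ n (x n)) (𝒰 : Filter ℕ)
        (nhds (χlim (Quotient.mk (Filter.productSetoid (𝒰 : Filter ℕ) G) x)))) :
    (∀ q, χlim q = 1) ↔ (∀ᶠ n in (𝒰 : Filter ℕ), ∀ a : G n, χ n a = 1) := by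
  constructor
  · intro h
    by_contra hc
    have hnonpos : ∀ᶠ n in (𝒰 : Filter ℕ), ∃ a, (χ n a : ℂ).re ≤ 0 := by
      filter_upwards [Ultrafilter.eventually_not.2 hc] with n hn
      exact (AddChar.ofMapAddEqMul (χ n) (hχhom n)).exists_re_nonpos
        fun hψ ↦ hn fun a ↦ DFunLike.congr_fun hψ a
    obtain ⟨x, hx⟩ := Filter.skolem.1 hnonpos
    have hlim : Tendsto (fun n ↦ χ n (x n)) 𝒰 (nhds 1) := h _ ▸ hχlim x
    have hre : Tendsto (fun n ↦ (χ n (x n) : ℂ).re) 𝒰 (nhds ((1 : Circle) : ℂ).re) :=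
      ((Complex.continuous_re.comp continuous_subtype_val).tendsto 1).comp hlim
    have hle := le_of_tendsto hre hx
    rw [Circle.coe_one, Complex.one_re] at hle
    exact one_pos.not_ge hle
  · intro h q
    induction q using Quotient.inductionOn with | h x => ?_
    refine tendsto_nhds_unique (hχlim x) (tendsto_const_nhds.congr' ?_)
    filter_upwards [h] with n hn using (hn (x n)).symm

/-- the ultralimit `χ` of continuous characters `χₙ : Gₙ → S¹` of compact
abelian groups, defined on the ultraproduct `∏_{n→𝒰} Gₙ`, is the trivial character if and
only if `χₙ` is trivial for `𝒰`-many `n`.  (`𝒰` is a nonprincipal ultrafilter on `ℕ`.) -/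
theorem ultralimit_character_trivial_iff
    (𝒰 : Ultrafilter ℕ) (h𝒰 : (𝒰 : Filter ℕ) ≤ Filter.cofinite)
    (G : ℕ → Type*) [∀ n, AddCommGroup (G n)] [∀ n, TopologicalSpace (G n)]
    [∀ n, CompactSpace (G n)] [∀ n, IsTopologicalAddGroup (G n)]
    (χ : ∀ n, G n → Circle)
    (hχcont : ∀ n, Continuous (χ n))
    (hχhom : ∀ n, ∀ a b : G n, χ n (a + b) = χ n a * χ n b)
    (χlim : Filter.Product (𝒰 : Filter ℕ) G → Circle)
    (hχlim : ∀ x : ∀ n, G n,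
      Filter.Tendsto (fun n => χ n (x n)) (𝒰 : Filter ℕ)
        (nhds (χlim (Quotient.mk (Filter.productSetoid (𝒰 : Filter ℕ) G) x)))) :
    (∀ q, χlim q = 1) ↔ (∀ᶠ n in (𝒰 : Filter ℕ), ∀ a : G n, χ n a = 1) :=
  ultralimit_character_trivial_iff_general 𝒰 G χ hχhom χlim hχlim
end
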